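/- arXiv:2504.20616 — 7 statements merged into one kernel-verified Lean document; each statement's English description precedes it below -/
import Mathlib

section
/- Every δ⁺-enforcible oriented tree is grounded: if T is an oriented tree such that for some d every finite digraph with minimum out-degree at least d contains T as a subgraph, then there is a height function of T that is constant on all vertices of T with in-degree at least 2. -/
/-- Out-degree of a vertex in a digraph given by a relation. -/
noncomputable def outDeg {V : Type*} (G : V → V → Prop) (v : V) : ℕ := Nat.card {u : V // G v u}

/-- In-degree of a vertex in a digraph given by a relation. -/
noncomputable def inDeg {V : Type*} (G : V → V → Prop) (v : V) : ℕ := Nat.card {u : V // G u v}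

/-- A digraph has no loops. -/
def Loopless {V : Type*} (G : V → V → Prop) : Prop := ∀ v, ¬ G v v
/-- An oriented tree: an orientation (at most one direction per pair) of a tree. -/
def IsOrientedTree {V : Type*} [Finite V] (T : V → V → Prop) : Prop :=
  (∀ u v, T u v → ¬ T v u) ∧ (SimpleGraph.fromRel T).IsTree

/-- A height function of an oriented tree. -/
def IsHeightFun {V : Type*} (T : V → V → Prop) (h : V → ℤ) : Prop :=
  ∀ u v, T u v → h v = h u + 1
/-- `T` is contained in `G` as a subgraph. -/
def ContainsSub {V W : Type*} (T : V → V → Prop) (G : W → W → Prop) : Prop :=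
  ∃ φ : V → W, Function.Injective φ ∧ ∀ u v, T u v → G (φ u) (φ v)
/-- `T` is `δ⁺`-enforcible: some `d` forces a copy of `T` in every digraph of
minimum out-degree at least `d`. -/
def Enforcible {V : Type*} [Finite V] (T : V → V → Prop) : Prop :=
  ∃ d : ℕ, ∀ (W : Type) (_ : Finite W) (_ : Nonempty W) (G : W → W → Prop),
    Loopless G → (∀ v, d ≤ outDeg G v) → ContainsSub T G

/-! ### Auxiliary material -/

open SimpleGraph Classical in
/-- Signed weight of a walk in the symmetrization of `T`. -/
noncomputable def wt {V : Type} (T : V → V → Prop) :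
    ∀ {u v : V}, (SimpleGraph.fromRel T).Walk u v → ℤ
  | _, _, .nil => 0
  | _, _, .cons (u := a) (v := b) _ q => (if T a b then 1 else -1) + wt T q

lemma wt_append {V : Type} (T : V → V → Prop) :
    ∀ {u v w : V} (p : (SimpleGraph.fromRel T).Walk u v)
      (q : (SimpleGraph.fromRel T).Walk v w),
      wt T (p.append q) = wt T p + wt T q := by
  intro u v w p q
  induction p with
  | nil => simp [wt]
  | cons e p ih => simp [wt, ih]; ring

/-- Every oriented tree admits a height function. -/
lemma exists_height {V : Type} [Finite V] (T : V → V → Prop)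
    (hanti : ∀ u v, T u v → ¬ T v u) (htree : (SimpleGraph.fromRel T).IsTree) :
    ∃ h : V → ℤ, (∀ u v, T u v → h v = h u + 1) := by
  haveI := Classical.decEq V
  haveI : Nonempty V := htree.isConnected.nonempty
  set r : V := Classical.arbitrary V with hr
  have hEU := htree.existsUnique_path
  let P : ∀ v, (SimpleGraph.fromRel T).Walk r v := fun v => (hEU r v).exists.choose
  have hPpath : ∀ v, (P v).IsPath := fun v => (hEU r v).exists.choose_spec
  have hPuniq : ∀ v (q : (SimpleGraph.fromRel T).Walk r v), q.IsPath → q = P v := by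
    intro v q hq
    exact ((hEU r v).unique hq (hPpath v))
  refine ⟨fun v => wt T (P v), ?_⟩
  intro u v huv
  show wt T (P v) = wt T (P u) + 1
  have hne : u ≠ v := by rintro rfl; exact hanti u u huv huv
  have e : (SimpleGraph.fromRel T).Adj u v := by
    rw [SimpleGraph.fromRel_adj]; exact ⟨hne, Or.inl huv⟩
  by_cases hv : v ∈ (P u).support
  · have hQ : (P u).takeUntil v hv = P v := hPuniq v _ ((hPpath u).takeUntil hv)
    have hsingle : (SimpleGraph.Walk.cons e.symm SimpleGraph.Walk.nil :
        (SimpleGraph.fromRel T).Walk v u).IsPath := by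
      rw [SimpleGraph.Walk.cons_isPath_iff]
      exact ⟨SimpleGraph.Walk.IsPath.nil, by simpa using hne.symm⟩
    have hD : (P u).dropUntil v hv = SimpleGraph.Walk.cons e.symm SimpleGraph.Walk.nil :=
      (hEU v u).unique ((hPpath u).dropUntil hv) hsingle
    have hspec := (P u).take_spec hv
    have := wt_append T ((P u).takeUntil v hv) ((P u).dropUntil v hv)
    rw [hspec, hQ, hD] at this
    have hwtD : wt T (SimpleGraph.Walk.cons e.symm SimpleGraph.Walk.nil :
        (SimpleGraph.fromRel T).Walk v u) = -1 := by
      simp [wt, hanti u v huv]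
    rw [hwtD] at this
    omega
  · have hcp : ((P u).concat e).IsPath := by
      rw [← SimpleGraph.Walk.isPath_reverse_iff, SimpleGraph.Walk.reverse_concat]
      exact (hPpath u).reverse.cons (by
        rw [SimpleGraph.Walk.support_reverse, List.mem_reverse]; exact hv)
    have hQ : (P u).concat e = P v := hPuniq v _ hcp
    have := wt_append T (P u) (SimpleGraph.Walk.cons e SimpleGraph.Walk.nil)
    rw [← SimpleGraph.Walk.concat_eq_append, hQ] at this
    rw [this]
    simp [wt, huv]

/-- Vertex set of the counterexample digraph. -/
def CW (M d : ℕ) : Type := Σ i : Fin M, (Fin (i.val + 1) → Fin d)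

instance (M d : ℕ) : Finite (CW M d) := by unfold CW; infer_instance

/-- Edge relation of the counterexample digraph. -/
def CG (M d : ℕ) : CW M d → CW M d → Prop := fun a b =>
  (a.1.val + 1 = b.1.val ∧
    ∀ (k : ℕ) (hk : k < a.1.val + 1) (hk' : k < b.1.val + 1), b.2 ⟨k, hk'⟩ = a.2 ⟨k, hk⟩)
  ∨ (a.1.val + 1 = M ∧ b.1.val = 0)

lemma CG_loopless (M d : ℕ) (hM : 2 ≤ M) : Loopless (CG M d) := by
  rintro a (⟨h1, _⟩ | ⟨h1, h2⟩) <;> omega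

lemma CG_outDeg (M d : ℕ) (a : CW M d) : d ≤ outDeg (CG M d) a := by
  have hcard : d = Nat.card (Fin d) := by simp
  refine le_trans (le_of_eq hcard) ?_
  by_cases ha : a.1.val + 1 < M
  · exact Nat.card_le_card_of_injective
      (fun c => (⟨⟨⟨a.1.val + 1, ha⟩,
          fun k => if hk : k.val < a.1.val + 1 then a.2 ⟨k.val, hk⟩ else c⟩,
        Or.inl ⟨rfl, by
          intro k hk hk'
          simp only [dif_pos hk]⟩⟩ : {b // CG M d a b}))
      (by
        intro c c' hcc'
        have h2 := eq_of_heq (Sigma.ext_iff.mp (congrArg Subtype.val hcc')).2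
        have := congrFun h2 ⟨a.1.val + 1, Nat.lt_succ_self _⟩
        simpa using this)
  · have hM : a.1.val + 1 = M := by have := a.1.isLt; omega
    have hM0 : 0 < M := by omega
    exact Nat.card_le_card_of_injective
      (fun c => (⟨⟨⟨0, hM0⟩, fun _ => c⟩, Or.inr ⟨hM, rfl⟩⟩ : {b // CG M d a b}))
      (by
        intro c c' hcc'
        have h2 := eq_of_heq (Sigma.ext_iff.mp (congrArg Subtype.val hcc')).2
        exact congrFun h2 ⟨0, Nat.one_pos⟩)

lemma CG_in_unique (M d : ℕ) (b : CW M d) (hb : b.1.val ≠ 0) :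
    ∀ a a' : CW M d, CG M d a b → CG M d a' b → a = a' := by
  rintro ⟨i, s⟩ ⟨i', s'⟩ (⟨h1, h2⟩ | ⟨_, h0⟩) h' <;> [skip; exact absurd h0 hb]
  rcases h' with ⟨h1', h2'⟩ | ⟨_, h0⟩
  swap
  · exact absurd h0 hb
  dsimp only at h1 h2 h1' h2'
  · have hii' : i = i' := Fin.ext (by omega)
    subst hii'
    have hss' : s = s' := by
      funext k
      have e1 := h2 k.val k.isLt (by omega)
      have e2 := h2' k.val k.isLt (by omega)
      rw [Fin.eta] at e1 e2
      rw [← e1, e2]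
    rw [hss']

/-- Every `δ⁺`-enforcible oriented tree is grounded: it has a height function that is
constant on the set of vertices of in-degree at least 2. -/
theorem stmt3 {V : Type} [Finite V] (T : V → V → Prop) (hT : IsOrientedTree T)
    (henf : Enforcible T) :
    ∃ h : V → ℤ, IsHeightFun T h ∧
      ∀ u v, 2 ≤ inDeg T u → 2 ≤ inDeg T v → h u = h v := by
  obtain ⟨hanti, htree⟩ := hT
  obtain ⟨h, hheight⟩ := exists_height T hanti htree
  refine ⟨h, hheight, ?_⟩
  by_contra hcon
  push_neg at hcon
  obtain ⟨a, b, ha2, hb2, hab⟩ := hcon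
  obtain ⟨d, hd⟩ := henf
  have hdiff : h a - h b ≠ 0 := sub_ne_zero.mpr hab
  set M : ℕ := (h a - h b).natAbs + 1 with hMdef
  have hM2 : 2 ≤ M := by
    have := Int.natAbs_pos.mpr hdiff
    omega
  set d' : ℕ := max d 1 with hd'def
  haveI : Nonempty (CW M d') :=
    ⟨⟨⟨0, by omega⟩, fun _ => ⟨0, by omega⟩⟩⟩
  obtain ⟨φ, hφinj, hφedge⟩ := hd (CW M d') inferInstance inferInstance (CG M d')
    (CG_loopless M d' hM2)
    (fun v => le_trans (le_max_left d 1) (CG_outDeg M d' v))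
  -- vertices of in-degree ≥ 2 are mapped to layer 0
  have hlayer : ∀ x : V, 2 ≤ inDeg T x → (φ x).1.val = 0 := by
    intro x hx
    by_contra h0
    have hsub := CG_in_unique M d' (φ x) h0
    have hinj2 : 2 ≤ Nat.card {w : CW M d' // CG M d' w (φ x)} := by
      refine le_trans hx (Nat.card_le_card_of_injective
        (fun u => ⟨φ u.1, hφedge u.1 x u.2⟩) ?_)
      intro u u' huu'
      exact Subtype.ext (hφinj (congrArg Subtype.val huu'))
    have hnt : Nontrivial {w : CW M d' // CG M d' w (φ x)} :=
      Finite.one_lt_card_iff_nontrivial.mp (by omega)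
    obtain ⟨⟨w, hw⟩, ⟨w', hw'⟩, hne⟩ := hnt
    exact hne (Subtype.ext (hsub w w' hw hw'))
  -- layers give a height function modulo M
  have hH : ∀ u v, T u v →
      (((φ v).1.val : ZMod M)) = ((φ u).1.val : ZMod M) + 1 := by
    intro u v huv
    rcases hφedge u v huv with ⟨h1, _⟩ | ⟨h1, h2⟩
    · rw [← h1]; push_cast; ring
    · rw [h2]
      have hcast : (((φ u).1.val + 1 : ℕ) : ZMod M) = 0 := by
        rw [h1]; exact ZMod.natCast_self M
      push_cast at hcast ⊢
      linear_combination -hcast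
  -- the difference of the two height functions is constant on the connected tree
  set D : V → ZMod M := fun v => ((φ v).1.val : ZMod M) - ((h v : ℤ) : ZMod M) with hDdef
  have hDadj : ∀ u v : V, (SimpleGraph.fromRel T).Adj u v → D u = D v := by
    intro u v huv
    rw [SimpleGraph.fromRel_adj] at huv
    rcases huv.2 with h' | h'
    · simp only [hDdef]
      rw [hH u v h', hheight u v h']
      push_cast
      ring
    · simp only [hDdef]
      rw [hH v u h', hheight v u h']
      push_cast
      ring
  have hwalkD : ∀ {x y : V} (_ : (SimpleGraph.fromRel T).Walk x y), D x = D y := by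
    intro x y p
    induction p with
    | nil => rfl
    | cons e p ih => exact (hDadj _ _ e).trans ih
  obtain ⟨p⟩ := htree.isConnected.preconnected a b
  have hDab : D a = D b := hwalkD p
  have hza : ((φ a).1.val : ZMod M) = 0 := by rw [hlayer a ha2]; simp
  have hzb : ((φ b).1.val : ZMod M) = 0 := by rw [hlayer b hb2]; simp
  have hhab : ((h a : ℤ) : ZMod M) = ((h b : ℤ) : ZMod M) := by
    simp only [hDdef, hza, hzb] at hDab
    linear_combination -hDab
  have hzero : (((h a - h b : ℤ)) : ZMod M) = 0 := by
    push_cast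
    rw [hhab]
    ring
  have hdvd : (M : ℤ) ∣ (h a - h b) := (ZMod.intCast_zmod_eq_zero_iff_dvd _ _).mp hzero
  have hle : (M : ℤ) ≤ |h a - h b| :=
    Int.le_of_dvd (abs_pos.mpr hdiff) ((dvd_abs _ _).mpr hdvd)
  rw [Int.abs_eq_natAbs, hMdef] at hle
  push_cast at hle
  omega
end

section
/- Let T be a grounded oriented tree with no leaf of in-degree 1 such that |U(T)| ≥ 2 and the minimal subtree T' of T containing U(T) is an out-arborescence. Then for sufficiently large k and ℓ, T is a subgraph of T(k,ℓ), where T(k,ℓ) is obtained from the complete ℓ-ary out-arborescence of depth k by identifying each leaf with the centre of a new copy of the (k−1)-subdivision of the in-star with ℓ leaves. -/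
/-- An out-arborescence with root `r`. -/
def IsOutArb {V : Type*} [Finite V] (T : V → V → Prop) (r : V) : Prop :=
  IsOrientedTree T ∧ inDeg T r = 0 ∧ ∀ v, v ≠ r → inDeg T v = 1
/-- The set of vertices of in-degree at least 2. -/
def Uset {V : Type*} (T : V → V → Prop) : Set V := {v | 2 ≤ inDeg T v}

/-- `S` is the vertex set of the minimal subtree of `T` containing the set `U`. -/
def MinimalSubtree {V : Type*} (T : V → V → Prop) (U S : Set V) : Prop :=
  U ⊆ S ∧ ((SimpleGraph.fromRel T).induce S).Connected ∧
    ∀ S' : Set V, U ⊆ S' → S' ⊆ S → ((SimpleGraph.fromRel T).induce S').Connected → S' = S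
/-- Vertices of `T(k,ℓ)`: the complete `ℓ`-ary out-arborescence of depth `k`
(vertices: lists over `Fin ℓ` of length at most `k`) together with, for each leaf
(list of length `k`), `ℓ` rays of `k` internal vertices each, indexed by their
distance minus one from the centre. -/
def TVert (k ℓ : ℕ) : Type :=
  {l : List (Fin ℓ) // l.length ≤ k} ⊕ ({l : List (Fin ℓ) // l.length = k} × Fin ℓ × Fin k)

/-- The edge relation of `T(k,ℓ)`: `B⁺_{k,ℓ}` with each leaf identified with the centre
of a new copy of `S⁻_{k,ℓ}` (rays directed towards the centre). -/
def TAdj (k ℓ : ℕ) : TVert k ℓ → TVert k ℓ → Prop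
  | Sum.inl u, Sum.inl v => ∃ a : Fin ℓ, (v : List (Fin ℓ)) = u.1 ++ [a]
  | Sum.inr (l, r, p), Sum.inr (l', r', p') => l = l' ∧ r = r' ∧ (p : ℕ) = (p' : ℕ) + 1
  | Sum.inr (l, _, p), Sum.inl v => (p : ℕ) = 0 ∧ (v : List (Fin ℓ)) = l.1
  | Sum.inl _, Sum.inr _ => False

section Degree

variable {V : Type*} {T : V → V → Prop} {a b v : V}

theorem eq_of_inDeg_le_one [Finite V] (hv : inDeg T v ≤ 1) (ha : T a v) (hb : T b v) : a = b := by
  have : Subsingleton {u // T u v} := Finite.card_le_one_iff_subsingleton.mp hv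
  exact congrArg Subtype.val (Subsingleton.elim (⟨a, ha⟩ : {u // T u v}) ⟨b, hb⟩)

theorem two_le_inDeg [Finite V] (hab : a ≠ b) (ha : T a v) (hb : T b v) : 2 ≤ inDeg T v :=
  Finite.one_lt_card_iff_nontrivial.mpr ⟨⟨a, ha⟩, ⟨b, hb⟩, fun h => hab (congrArg Subtype.val h)⟩

theorem inDeg_pos [Finite V] (ha : T a v) : 0 < inDeg T v :=
  have : Nonempty {u // T u v} := ⟨⟨a, ha⟩⟩
  Nat.card_pos

theorem exists_of_inDeg_pos (hv : 0 < inDeg T v) : ∃ a, T a v :=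
  let ⟨⟨a, ha⟩⟩ := (Nat.card_pos_iff.mp hv).1
  ⟨a, ha⟩

theorem mem_Uset_of_sink_of_rel [Finite V] (hnoleaf : ∀ v, ¬ (inDeg T v = 1 ∧ outDeg T v = 0))
    (hsink : ∀ w, ¬ T v w) (ha : T a v) : v ∈ Uset T := by
  have : IsEmpty {w // T v w} := ⟨fun w => hsink w w.2⟩
  have hout : outDeg T v = 0 := Nat.card_of_isEmpty
  have := inDeg_pos ha
  have : inDeg T v ≠ 1 := fun h1 => hnoleaf v ⟨h1, hout⟩
  show 2 ≤ inDeg T v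
  omega

end Degree

theorem IsHeightFun.fromRel_adj {V : Type*} {T : V → V → Prop} {h : V → ℤ} (hh : IsHeightFun T h)
    {a b : V} (hab : T a b) : (SimpleGraph.fromRel T).Adj a b :=
  ⟨fun e => by subst e; have := hh a a hab; omega, Or.inl hab⟩

theorem SimpleGraph.IsAcyclic.support_subset_of_isPath {V : Type*} {G : SimpleGraph V}
    (hG : G.IsAcyclic) {a b : V} {p : G.Walk a b} (hp : p.IsPath) (q : G.Walk a b) :
    p.support ⊆ q.support := by
  classical
  have : p = q.bypass :=
    congrArg Subtype.val ((hG.subsingleton_path a b).elim ⟨p, hp⟩ ⟨_, q.bypass_isPath⟩)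
  exact this ▸ q.support_bypass_subset_support

section FirstHit

variable {α : Type*} {f : α → α} {S : Set α} (hf : ∀ a, ∃ n, f^[n] a ∈ S) {a b : α}

open Classical in
noncomputable def hitTime (a : α) : ℕ := Nat.find (hf a)

noncomputable def hitPoint (a : α) : α := f^[hitTime hf a] a

/-- The last point before entering `S` (for `a ∈ S` the truncated subtraction makes it `a`). -/
noncomputable def lastOut (a : α) : α := f^[hitTime hf a - 1] a

theorem hitPoint_mem (a : α) : hitPoint hf a ∈ S := by
  classical exact Nat.find_spec (hf a)

theorem hitTime_eq_zero_iff : hitTime hf a = 0 ↔ a ∈ S := by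
  classical exact Nat.find_eq_zero (hf a)

theorem hitTime_of_not_mem (ha : a ∉ S) : hitTime hf a = hitTime hf (f a) + 1 := by
  classical exact Nat.find_comp_succ (hf a) (hf (f a)) ha

theorem hitPoint_of_mem (ha : a ∈ S) : hitPoint hf a = a := by
  rw [hitPoint, (hitTime_eq_zero_iff hf).mpr ha, Function.iterate_zero_apply]

theorem hitPoint_of_not_mem (ha : a ∉ S) : hitPoint hf a = hitPoint hf (f a) := by
  rw [hitPoint, hitPoint, hitTime_of_not_mem hf ha, Function.iterate_succ_apply]

theorem hitTime_pos (ha : a ∉ S) : 0 < hitTime hf a :=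
  Nat.pos_of_ne_zero fun h => ha ((hitTime_eq_zero_iff hf).mp h)

theorem lastOut_not_mem (ha : a ∉ S) : lastOut hf a ∉ S := by
  classical exact Nat.find_min (hf a) (Nat.sub_lt (hitTime_pos hf ha) one_pos)

theorem apply_lastOut (ha : a ∉ S) : f (lastOut hf a) = hitPoint hf a := by
  rw [lastOut, hitPoint, ← Function.iterate_succ_apply' f, hitTime_of_not_mem hf ha]
  rfl

theorem lastOut_of_apply_mem (ha : a ∉ S) (hfa : f a ∈ S) : lastOut hf a = a := by
  rw [lastOut, hitTime_of_not_mem hf ha, (hitTime_eq_zero_iff hf).mpr hfa]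
  rfl

theorem lastOut_of_apply_not_mem (ha : a ∉ S) (hfa : f a ∉ S) :
    lastOut hf a = lastOut hf (f a) := by
  rw [lastOut, lastOut, hitTime_of_not_mem hf ha, hitTime_of_not_mem hf hfa]
  rfl

theorem eq_of_hitTime_eq_of_lastOut_eq
    (hinj : ∀ a b, a ∉ S → b ∉ S → f a = f b → f a ∉ S → a = b) (ha : a ∉ S) (hb : b ∉ S)
    (ht : hitTime hf a = hitTime hf b) (hl : lastOut hf a = lastOut hf b) : a = b := by
  induction hn : hitTime hf a generalizing a b with
  | zero => exact absurd ((hitTime_eq_zero_iff hf).mp hn) ha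
  | succ n ih =>
    have hfa := hitTime_of_not_mem hf ha
    have hfb := hitTime_of_not_mem hf hb
    by_cases hsa : f a ∈ S
    · have hsb : f b ∈ S := by
        rw [← hitTime_eq_zero_iff hf] at hsa ⊢
        omega
      rwa [lastOut_of_apply_mem hf ha hsa, lastOut_of_apply_mem hf hb hsb] at hl
    · have hsb : f b ∉ S := by
        rw [← hitTime_eq_zero_iff hf] at hsa ⊢
        omega
      rw [lastOut_of_apply_not_mem hf ha hsa, lastOut_of_apply_not_mem hf hb hsb] at hl
      exact hinj a b ha hb (ih hsa hsb (by omega) hl (by omega)) hsa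

theorem exists_iterate_mem {g : α → ℤ} {B : ℤ} (hg : ∀ a ∉ S, g (f a) = g a + 1) (hB : ∀ a, g a ≤ B)
    (a : α) : ∃ n, f^[n] a ∈ S := by
  by_cases ha : a ∈ S
  · exact ⟨0, ha⟩
  obtain ⟨n, hn⟩ := exists_iterate_mem hg hB (f a)
  exact ⟨n + 1, hn⟩
termination_by (B - g a).toNat
decreasing_by have := hg a ha; have := hB (f a); omega

theorem height_hitPoint {g : α → ℤ} (hg : ∀ a ∉ S, g (f a) = g a + 1) (a : α) :
    g (hitPoint hf a) = g a + hitTime hf a := by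
  induction hn : hitTime hf a generalizing a with
  | zero => rw [hitPoint_of_mem hf ((hitTime_eq_zero_iff hf).mp hn)]; simp
  | succ n ih =>
    have ha : a ∉ S := fun ha => by simp [(hitTime_eq_zero_iff hf).mpr ha] at hn
    rw [hitPoint_of_not_mem hf ha, ih (f a) (by have := hitTime_of_not_mem hf ha; omega), hg a ha]
    push_cast
    ring

end FirstHit

theorem SimpleGraph.Connected.exists_walk_support_subset {V : Type*} {G : SimpleGraph V}
    {S : Set V} (hS : (G.induce S).Connected) {a b : V} (ha : a ∈ S) (hb : b ∈ S) :
    ∃ p : G.Walk a b, ∀ x ∈ p.support, x ∈ S := by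
  obtain ⟨q⟩ := hS.preconnected ⟨a, ha⟩ ⟨b, hb⟩
  have hq : ∀ x ∈ (q.map (Embedding.induce S).toHom).support, x ∈ S := by
    simp only [Walk.support_map, List.mem_map]
    rintro _ ⟨y, -, rfl⟩
    exact y.2
  exact ⟨_, hq⟩

section OrientedTree

variable {V : Type*} {T : V → V → Prop} {S : Set V} {h : V → ℤ} {H : ℤ} {a b v : V}

open SimpleGraph

theorem IsOrientedTree.mem_Uset_of_sink [Finite V] [Nontrivial V] (hT : IsOrientedTree T)
    (hnoleaf : ∀ v, ¬ (inDeg T v = 1 ∧ outDeg T v = 0)) (hsink : ∀ w, ¬ T v w) : v ∈ Uset T := by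
  obtain ⟨w, -, hw⟩ := hT.2.connected.preconnected.exists_adj_of_nontrivial v
  exact mem_Uset_of_sink_of_rel hnoleaf hsink (hw.resolve_left (hsink w))

theorem IsOrientedTree.height_le [Finite V] [Nontrivial V] (hT : IsOrientedTree T)
    (hnoleaf : ∀ v, ¬ (inDeg T v = 1 ∧ outDeg T v = 0)) (hh : IsHeightFun T h)
    (hUH : ∀ u ∈ Uset T, h u = H) (v : V) : h v ≤ H := by
  obtain ⟨v₀, hv₀⟩ := Finite.exists_max h
  have hsink : ∀ w, ¬ T v₀ w := fun w hw => by have := hh v₀ w hw; have := hv₀ w; omega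
  have := hUH v₀ (hT.mem_Uset_of_sink hnoleaf hsink)
  have := hv₀ v
  omega

theorem exists_walk_to_set (hh : IsHeightFun T h) (hle : ∀ v, h v ≤ H)
    (hout : ∀ v ∉ S, ∃ w, T v w) (v : V) :
    ∃ s ∈ S, ∃ p : (fromRel T).Walk v s, ∀ y ∈ p.support, h v ≤ h y := by
  by_cases hv : v ∈ S
  · exact ⟨v, hv, .nil, by simp⟩
  obtain ⟨w, hw⟩ := hout v hv
  have hvw := hh v w hw
  obtain ⟨s, hs, p, hp⟩ := exists_walk_to_set hh hle hout w
  refine ⟨s, hs, .cons (hh.fromRel_adj hw) p, fun y hy => ?_⟩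
  rw [Walk.support_cons, List.mem_cons] at hy
  rcases hy with rfl | hy
  · exact le_rfl
  · have := hp y hy; omega
termination_by (H - h v).toNat
decreasing_by have := hle w; omega

/-- Both `a` and `b` reach the connected set `S` without passing through `v`, so `a - v - b`
would close a cycle. -/
theorem eq_of_adj_of_adj_of_not_mem (hacyc : (fromRel T).IsAcyclic)
    (hS : ((fromRel T).induce S).Connected) (hh : IsHeightFun T h) (hle : ∀ v, h v ≤ H)
    (hout : ∀ v ∉ S, ∃ w, T v w) (hv : v ∉ S) (hav : (fromRel T).Adj a v)
    (hvb : (fromRel T).Adj v b) (ha : a ∈ S ∨ h v < h a) (hb : b ∈ S ∨ h v < h b) : a = b := by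
  have avoid : ∀ x, x ∈ S ∨ h v < h x → ∃ s ∈ S, ∃ p : (fromRel T).Walk x s, v ∉ p.support := by
    rintro x (hx | hx)
    · refine ⟨x, hx, .nil, ?_⟩
      rw [Walk.support_nil, List.mem_singleton]
      rintro rfl
      exact hv hx
    · obtain ⟨s, hs, p, hp⟩ := exists_walk_to_set hh hle hout x
      exact ⟨s, hs, p, fun hmem => by have := hp v hmem; omega⟩
  obtain ⟨s, hs, p, hp⟩ := avoid a ha
  obtain ⟨s', hs', p', hp'⟩ := avoid b hb
  obtain ⟨q, hq⟩ := hS.exists_walk_support_subset hs hs'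
  by_contra hab
  have hpath : (Walk.cons hav (.cons hvb .nil)).IsPath := by
    simp [Walk.cons_isPath_iff, hab, hav.ne, hvb.ne]
  have hmem : v ∈ (Walk.cons hav (.cons hvb .nil)).support := by simp
  have := hacyc.support_subset_of_isPath hpath (p.append (q.append p'.reverse)) hmem
  simp only [Walk.mem_support_append_iff, Walk.support_reverse, List.mem_reverse] at this
  exact this.elim hp (Or.elim · (fun hmem => hv (hq v hmem)) hp')

theorem exists_forall_not_mem_rel_iff (hacyc : (fromRel T).IsAcyclic)
    (hS : ((fromRel T).induce S).Connected) (hh : IsHeightFun T h) (hle : ∀ v, h v ≤ H)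
    (hout : ∀ v ∉ S, ∃ w, T v w) :
    ∃ next : V → V, ∀ v ∉ S, ∀ w, T v w ↔ w = next v := by
  choose! next hnext using fun v hv => hout v hv
  refine ⟨next, fun v hv w => ⟨fun hw => ?_, fun e => e ▸ hnext v hv⟩⟩
  have := hh v w hw
  have := hh v _ (hnext v hv)
  exact eq_of_adj_of_adj_of_not_mem hacyc hS hh hle hout hv (hh.fromRel_adj hw).symm
    (hh.fromRel_adj (hnext v hv)) (.inr (by omega)) (.inr (by omega))

theorem mem_of_rel_of_mem (hacyc : (fromRel T).IsAcyclic)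
    (hS : ((fromRel T).induce S).Connected) (hh : IsHeightFun T h) (hle : ∀ v, h v ≤ H)
    (hout : ∀ v ∉ S, ∃ w, T v w) (ha : a ∈ S)
    (hab : T a b) : b ∈ S := by
  by_contra hb
  obtain ⟨w, hw⟩ := hout b hb
  have haw := eq_of_adj_of_adj_of_not_mem hacyc hS hh hle hout hb (hh.fromRel_adj hab)
    (hh.fromRel_adj hw) (.inl ha) (.inr (by have := hh b w hw; omega))
  subst haw
  have := hh a b hab
  have := hh b a hw
  omega

end OrientedTree

def ancestorLabels {W α : Type*} (par : W → W) (lab : W → α) : ℕ → W → List α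
  | 0, _ => []
  | n + 1, v => ancestorLabels par lab n (par v) ++ [lab v]

theorem length_ancestorLabels {W α : Type*} (par : W → W) (lab : W → α) (n : ℕ) (v : W) :
    (ancestorLabels par lab n v).length = n := by
  induction n generalizing v <;> simp [ancestorLabels, *]

section OutArborescence

variable {W : Type*} [Finite W] {A : W → W → Prop} {r : W} {h : W → ℤ}

theorem height_root_lt (hdeg : ∀ v, v ≠ r → inDeg A v = 1) (hh : IsHeightFun A h) {v : W}
    (hv : v ≠ r) : h r < h v := by
  have : Nonempty W := ⟨r⟩
  have hmin : ∀ w, h r ≤ h w := by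
    obtain ⟨v₀, hv₀⟩ := Finite.exists_min h
    suffices v₀ = r from this ▸ hv₀
    by_contra hne
    obtain ⟨p, hp⟩ := exists_of_inDeg_pos (hdeg v₀ hne).ge
    have := hh p v₀ hp
    have := hv₀ p
    omega
  obtain ⟨p, hp⟩ := exists_of_inDeg_pos (hdeg v hv).ge
  have := hh p v hp
  have := hmin p
  omega

theorem exists_address (hr : inDeg A r = 0) (hdeg : ∀ v, v ≠ r → inDeg A v = 1)
    (hh : IsHeightFun A h) {α : Type*} {lab : W → α} (hlab : Function.Injective lab)
    (base : List α) :
    ∃ ψ : W → List α, Function.Injective ψ ∧ ψ r = base ∧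
      (∀ v, (ψ v).length = base.length + (h v - h r).toNat) ∧
      ∀ a b, A a b → ∃ c, ψ b = ψ a ++ [c] := by
  choose! par hpar using fun v (hv : v ≠ r) => exists_of_inDeg_pos (hdeg v hv).ge
  let depth : W → ℕ := fun v => (h v - h r).toNat
  have hdepth : ∀ v, v ≠ r → depth v = depth (par v) + 1 := fun v hv => by
    have := hh _ _ (hpar v hv)
    have : h r ≤ h (par v) := by
      by_cases hp : par v = r
      · rw [hp]
      · exact (height_root_lt hdeg hh hp).le
    simp only [depth]
    omega
  let ψ : W → List α := fun v => base ++ ancestorLabels par lab (depth v) v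
  have hψ : ∀ v, v ≠ r → ψ v = ψ (par v) ++ [lab v] := fun v hv => by
    simp only [ψ, hdepth v hv, ancestorLabels, List.append_assoc]
  have hne : ∀ a b, A a b → b ≠ r := fun a b hab e => by
    subst e
    have := inDeg_pos hab
    omega
  refine ⟨ψ, fun v w hvw => ?_, by simp [ψ, depth, ancestorLabels],
    fun v => by simp [ψ, length_ancestorLabels, depth], fun a b hab => ⟨lab b, ?_⟩⟩
  · have hlen : depth v = depth w := by
      simpa [ψ, length_ancestorLabels] using congrArg List.length hvw
    have hr0 : depth r = 0 := by simp [depth]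
    by_cases hv : v = r <;> by_cases hw : w = r
    · rw [hv, hw]
    · have := hdepth w hw
      subst hv
      omega
    · have := hdepth v hv
      subst hw
      omega
    · rw [hψ v hv, hψ w hw] at hvw
      exact hlab (List.singleton_inj.mp (List.append_inj' hvw rfl).2)
  · have hb := hne a b hab
    rw [hψ b hb, eq_of_inDeg_le_one (hdeg b hb).le (hpar b hb) hab]

end OutArborescence

/-- `T(k, ℓ)` with the bounds on word lengths and ray positions dropped; `InBounds k` cuts
`T(k, ℓ)` back out. -/
abbrev RawVert (ℓ : ℕ) : Type := List (Fin ℓ) ⊕ (List (Fin ℓ) × Fin ℓ × ℕ)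

def RawAdj {ℓ : ℕ} : RawVert ℓ → RawVert ℓ → Prop
  | .inl u, .inl v => ∃ a, v = u ++ [a]
  | .inr (l, c, p), .inr (l', c', p') => l = l' ∧ c = c' ∧ p = p' + 1
  | .inr (l, _, p), .inl v => p = 0 ∧ v = l
  | .inl _, .inr _ => False

def InBounds {ℓ : ℕ} (k : ℕ) : RawVert ℓ → Prop
  | .inl l => l.length ≤ k
  | .inr (l, _, p) => l.length = k ∧ p < k

def TVert.ofRaw {k ℓ : ℕ} : (x : RawVert ℓ) → InBounds k x → TVert k ℓ
  | .inl l, hl => .inl ⟨l, hl⟩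
  | .inr (l, c, p), hb => .inr (⟨l, hb.1⟩, c, ⟨p, hb.2⟩)

theorem TVert.ofRaw_injective {k ℓ : ℕ} {x y : RawVert ℓ} (hx : InBounds k x) (hy : InBounds k y)
    (hxy : TVert.ofRaw x hx = TVert.ofRaw y hy) : x = y := by
  rcases x with _ | ⟨_, _, _⟩ <;> rcases y with _ | ⟨_, _, _⟩ <;> cases hxy <;> rfl

theorem TVert.ofRaw_adj {k ℓ : ℕ} {x y : RawVert ℓ} (hx : InBounds k x) (hy : InBounds k y)
    (hxy : RawAdj x y) : TAdj k ℓ (TVert.ofRaw x hx) (TVert.ofRaw y hy) := by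
  rcases x with _ | ⟨_, _, _⟩ <;> rcases y with _ | ⟨_, _, _⟩ <;>
    simp_all [TVert.ofRaw, TAdj, RawAdj]

theorem containsSub_TAdj_of_raw {V : Type*} {T : V → V → Prop} {k ℓ : ℕ} (φ : V → RawVert ℓ)
    (hφ : Function.Injective φ) (hadj : ∀ a b, T a b → RawAdj (φ a) (φ b))
    (hb : ∀ v, InBounds k (φ v)) : ContainsSub T (TAdj k ℓ) :=
  ⟨fun v => TVert.ofRaw (φ v) (hb v), fun _ _ hab => hφ (TVert.ofRaw_injective _ _ hab),
    fun a b hab => TVert.ofRaw_adj _ _ (hadj a b hab)⟩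

section PendantEmbedding

variable {V : Type*} {ℓ : ℕ} {S : Set V} {next : V → V} (U : Set V)
  (hf : ∀ v, ∃ n, next^[n] v ∈ S) (ψ : S → List (Fin ℓ)) (lab : V → Fin ℓ) (r : S)

open Classical in
/-- `S` goes to the words `ψ`. A vertex outside `S` whose path along `next` enters `S` at
`u ∈ U` goes to the ray of the leaf `ψ u` named after the last vertex of that path; one whose path
enters at `r` goes to the ancestor of `ψ r` at the same distance. -/
noncomputable def pendantEmbed (v : V) : RawVert ℓ :=
  if hv : v ∈ S then .inl (ψ ⟨v, hv⟩)
  else if hitPoint hf v ∈ U then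
    .inr (ψ ⟨hitPoint hf v, hitPoint_mem hf v⟩, lab (lastOut hf v), hitTime hf v - 1)
  else .inl ((ψ r).take ((ψ r).length - hitTime hf v))

theorem pendantEmbed_injective (hψ : Function.Injective ψ)
    (hlen : ∀ s, (ψ r).length ≤ (ψ s).length) (hlab : Function.Injective lab) (hUS : U ⊆ S)
    (hinj : ∀ a b, a ∉ S → b ∉ S → next a = next b → next a ∉ U → a = b)
    (hend : ∀ v ∉ S, hitPoint hf v ∈ U ∨ hitPoint hf v = r)
    (hm : ∀ v, hitTime hf v ≤ (ψ r).length) : Function.Injective (pendantEmbed U hf ψ lab r) := by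
  have key : ∀ a b, a ∉ S → b ∉ S → hitTime hf a = hitTime hf b → lastOut hf a = lastOut hf b →
      a = b := fun a b ha hb => eq_of_hitTime_eq_of_lastOut_eq hf
    (fun a b ha hb e hs => hinj a b ha hb e (fun hu => hs (hUS hu))) ha hb
  have mixed : ∀ a b, a ∈ S → b ∉ S →
      pendantEmbed U hf ψ lab r a ≠ pendantEmbed U hf ψ lab r b := by
    intro a b ha hb hab
    have := hlen ⟨a, ha⟩
    have := hm b
    have := hitTime_pos hf hb
    by_cases hub : hitPoint hf b ∈ U <;>
      simp only [pendantEmbed, ha, hb, hub, dite_true, dite_false, if_true, if_false, reduceCtorEq,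
        Sum.inl.injEq] at hab
    have := congrArg List.length hab
    simp only [List.length_take] at this
    omega
  intro a b hab
  by_cases ha : a ∈ S <;> by_cases hb : b ∈ S
  · simp only [pendantEmbed, ha, hb, dite_true, Sum.inl.injEq] at hab
    exact congrArg Subtype.val (hψ hab)
  · exact absurd hab (mixed a b ha hb)
  · exact absurd hab.symm (mixed b a hb ha)
  have := hitTime_pos hf ha
  have := hitTime_pos hf hb
  have := hm a
  have := hm b
  by_cases hua : hitPoint hf a ∈ U <;> by_cases hub : hitPoint hf b ∈ U <;>
    simp only [pendantEmbed, ha, hb, hua, hub, dite_false, if_true, if_false, reduceCtorEq,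
      Sum.inl.injEq, Sum.inr.injEq, Prod.mk.injEq] at hab
  · exact key a b ha hb (by omega) (hlab hab.2.1)
  · have ht : hitTime hf a = hitTime hf b := by
      have := congrArg List.length hab
      simp only [List.length_take] at this
      omega
    refine key a b ha hb ht (hinj _ _ (lastOut_not_mem hf ha) (lastOut_not_mem hf hb) ?_ ?_)
    · rw [apply_lastOut hf ha, apply_lastOut hf hb, (hend a ha).resolve_left hua,
        (hend b hb).resolve_left hub]
    · rwa [apply_lastOut hf ha]

theorem pendantEmbed_adj {T : V → V → Prop}
    (hψ : ∀ a b : S, T a b → ∃ c, ψ b = ψ a ++ [c]) (hnext : ∀ v ∉ S, ∀ w, T v w → w = next v)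
    (hclosed : ∀ a ∈ S, ∀ b, T a b → b ∈ S)
    (hend : ∀ v ∉ S, hitPoint hf v ∈ U ∨ hitPoint hf v = r)
    (hm : ∀ v, hitTime hf v ≤ (ψ r).length) {a b : V} (hab : T a b) :
    RawAdj (pendantEmbed U hf ψ lab r a) (pendantEmbed U hf ψ lab r b) := by
  by_cases ha : a ∈ S
  · have hb := hclosed a ha b hab
    simpa only [pendantEmbed, ha, hb, dite_true, RawAdj] using hψ ⟨a, ha⟩ ⟨b, hb⟩ hab
  obtain rfl := hnext a ha b hab
  have hta := hitTime_of_not_mem hf ha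
  have := hm a
  have ancestor : ∃ c, (ψ r).take ((ψ r).length - hitTime hf (next a)) =
      (ψ r).take ((ψ r).length - hitTime hf a) ++ [c] :=
    ⟨_, by rw [List.take_concat_get' _ _ (by omega)]; congr 1; omega⟩
  by_cases hb : next a ∈ S
  · have hp : hitPoint hf a = next a := by rw [hitPoint_of_not_mem hf ha, hitPoint_of_mem hf hb]
    rw [(hitTime_eq_zero_iff hf).mpr hb] at hta ancestor
    by_cases hu : next a ∈ U
    · simp [pendantEmbed, ha, hb, hp, hu, hta, RawAdj]
    · have hr : next a = r := hp ▸ (hend a ha).resolve_left (by rwa [hp])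
      simp only [pendantEmbed, ha, hb, hp, hu, dite_true, dite_false, if_false, RawAdj]
      simpa [hr] using ancestor
  · have hp := hitPoint_of_not_mem hf ha
    have := hitTime_pos hf hb
    by_cases hu : hitPoint hf a ∈ U
    · simp [pendantEmbed, ha, hb, ← hp, hu, lastOut_of_apply_not_mem hf ha hb, RawAdj]
      omega
    · simpa [pendantEmbed, ha, hb, ← hp, hu, RawAdj] using ancestor

theorem pendantEmbed_inBounds {k : ℕ} (hS : ∀ s, (ψ s).length ≤ k)
    (hU : ∀ s : S, (s : V) ∈ U → (ψ s).length = k) (hm : ∀ v, hitTime hf v ≤ k) (v : V) :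
    InBounds k (pendantEmbed U hf ψ lab r v) := by
  unfold pendantEmbed
  split_ifs with hv hu
  · exact hS _
  · exact ⟨hU _ hu, by have := hitTime_pos hf hv; have := hm v; omega⟩
  · exact (List.length_take_le' _ _).trans (hS r)

end PendantEmbedding

section Assembly

variable {V : Type*} [Finite V] {T : V → V → Prop} {S : Set V} {next : V → V}

theorem hitPoint_mem_Uset_or_eq (r : S)
    (hdeg : ∀ v, v ≠ r → inDeg (fun a b : S => T a b) v = 1)
    (hnext : ∀ v ∉ S, ∀ w, T v w ↔ w = next v) (hf : ∀ v, ∃ n, next^[n] v ∈ S) {v : V}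
    (hv : v ∉ S) : hitPoint hf v ∈ Uset T ∨ hitPoint hf v = r := by
  refine or_iff_not_imp_right.mpr fun hne => ?_
  obtain ⟨p, hp⟩ := exists_of_inDeg_pos
    (hdeg ⟨_, hitPoint_mem hf v⟩ fun e => hne (congrArg Subtype.val e)).ge
  have hlast : T (lastOut hf v) (hitPoint hf v) := by
    rw [← apply_lastOut hf hv]
    exact (hnext _ (lastOut_not_mem hf hv) _).2 rfl
  have hp_ne : (p : V) ≠ lastOut hf v := fun e => lastOut_not_mem hf hv (e ▸ p.2)
  exact two_le_inDeg hp_ne hp hlast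

theorem exists_containsSub_TAdj {h : V → ℤ} {H : ℤ} (r : S)
    (hr0 : inDeg (fun a b : S => T a b) r = 0)
    (hdeg : ∀ v, v ≠ r → inDeg (fun a b : S => T a b) v = 1)
    (hh : IsHeightFun T h) (hle : ∀ v, h v ≤ H) (hUH : ∀ u ∈ Uset T, h u = H)
    (hUS : Uset T ⊆ S) (hnext : ∀ v ∉ S, ∀ w, T v w ↔ w = next v)
    (hclosed : ∀ a ∈ S, ∀ b, T a b → b ∈ S) :
    ∃ k₀ ℓ₀ : ℕ, ∀ k ≥ k₀, ∀ ℓ ≥ ℓ₀, ContainsSub T (TAdj k ℓ) := by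
  have hg : ∀ v ∉ S, h (next v) = h v + 1 := fun v hv => hh v _ ((hnext v hv _).2 rfl)
  have hf : ∀ v, ∃ n, next^[n] v ∈ S := exists_iterate_mem hg hle
  have hend := fun v => hitPoint_mem_Uset_or_eq r hdeg hnext hf (v := v)
  have : Nonempty V := ⟨r⟩
  obtain ⟨v₀, hv₀⟩ := Finite.exists_min h
  have hm : ∀ v, hitTime hf v ≤ (H - h v₀).toNat := fun v => by
    have := height_hitPoint hf hg v
    have := hle (hitPoint hf v)
    have := hv₀ v
    omega
  have hinj : ∀ a b, a ∉ S → b ∉ S → next a = next b → next a ∉ Uset T → a = b :=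
    fun a b ha hb e hU => eq_of_inDeg_le_one (Nat.lt_succ_iff.mp (not_le.mp hU))
      ((hnext a ha _).2 rfl) (e ▸ (hnext b hb _).2 rfl)
  refine ⟨2 * (H - h v₀).toNat, Nat.card V, fun k hk ℓ hℓ => ?_⟩
  let lab : V → Fin ℓ := Fin.castLE hℓ ∘ Finite.equivFin V
  have hlab : Function.Injective lab :=
    (Fin.castLE_injective hℓ).comp (Finite.equivFin V).injective
  -- `r` sits at depth `k - (H - h r)`, so that `U`, at height `H`, lands on the leaves
  obtain ⟨ψ, hψ, -, hψlen, hψadj⟩ := exists_address (A := fun a b : S => T a b) hr0 hdeg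
    (fun a b hab => hh a b hab) (hlab.comp Subtype.val_injective)
    (List.replicate (k - (H - h r).toNat) (lab r))
  simp only [List.length_replicate] at hψlen
  have := hv₀ r
  have := hle r
  refine containsSub_TAdj_of_raw _
    (pendantEmbed_injective _ hf ψ lab r hψ ?_ hlab hUS hinj hend ?_)
    (fun a b hab => pendantEmbed_adj _ hf ψ lab r hψadj (fun v hv w => (hnext v hv w).1) hclosed
      hend ?_ hab) (pendantEmbed_inBounds _ hf ψ lab r ?_ ?_ ?_)
  · exact fun s => by rw [hψlen, hψlen]; simp
  · exact fun v => by rw [hψlen]; have := hm v; omega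
  · exact fun v => by rw [hψlen]; have := hm v; omega
  · exact fun s => by rw [hψlen]; have := hle s; omega
  · exact fun s hs => by rw [hψlen, hUH s hs]; omega
  · exact fun v => by have := hm v; omega

end Assembly

/-- If `T` is grounded, has no leaf of in-degree 1, `|U(T)| ≥ 2`, and the minimal
subtree of `T` containing `U(T)` is an out-arborescence, then for all sufficiently
large `k` and `ℓ`, `T` is a subgraph of `T(k,ℓ)`. -/
theorem stmt8 {V : Type} [Finite V] (T : V → V → Prop) (hT : IsOrientedTree T)
    (hground : ∃ h : V → ℤ, IsHeightFun T h ∧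
      ∀ u v, u ∈ Uset T → v ∈ Uset T → h u = h v)
    (hnoleaf : ∀ v, ¬ (inDeg T v = 1 ∧ outDeg T v = 0))
    (S : Set V) (hmin : MinimalSubtree T (Uset T) S)
    (hU2 : 2 ≤ Nat.card (Uset T))
    (r : V) (hr : r ∈ S)
    (harb : IsOutArb (fun a b : S => T a b) ⟨r, hr⟩) :
    ∃ k₀ ℓ₀ : ℕ, ∀ k ≥ k₀, ∀ ℓ ≥ ℓ₀, ContainsSub T (TAdj k ℓ) := by
  obtain ⟨h, hh, hconst⟩ := hground
  obtain ⟨⟨u, hu⟩, ⟨u', _⟩, hne⟩ := (Finite.one_lt_card_iff_nontrivial.mp hU2).exists_pair_ne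
  have : Nontrivial V := ⟨u, u', fun e => hne (Subtype.ext e)⟩
  have hUH : ∀ v ∈ Uset T, h v = h u := fun v hv => hconst v u hv hu
  have hle := hT.height_le hnoleaf hh hUH
  have hout : ∀ v ∉ S, ∃ w, T v w := fun v hv => by
    by_contra! hsink
    exact hv (hmin.1 (hT.mem_Uset_of_sink hnoleaf hsink))
  have hacyc := hT.2.isAcyclic
  obtain ⟨next, hnext⟩ := exists_forall_not_mem_rel_iff hacyc hmin.2.1 hh hle hout
  exact exists_containsSub_TAdj ⟨r, hr⟩ harb.2.1 harb.2.2 hh hle hUH hmin.1 hnext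
    (fun a ha b hab => mem_of_rel_of_mem hacyc hmin.2.1 hh hle hout ha hab)
end

section
/- Let 𝒫 be a δ⁺-common vertex property with threshold d(𝒫), let k ≥ 1, ℓ ≥ 2, and let G be a digraph with minimum out-degree at least d(𝒫) + 2kℓ^k. Then G contains a copy of the complete ℓ-ary out-arborescence of depth k all of whose leaves satisfy 𝒫 in G. -/
/-- A `δ⁺`-common vertex property with threshold `d`: every (finite, nonempty,
loopless) digraph of minimum out-degree at least `d` has a vertex satisfying it,
and it is anti-monotone under taking subgraphs. -/
def DeltaCommon (P : ∀ W : Type, (W → W → Prop) → W → Prop) (d : ℕ) : Prop :=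
  (∀ (W : Type) (_ : Finite W) (_ : Nonempty W) (G : W → W → Prop),
      Loopless G → (∀ v, d ≤ outDeg G v) → ∃ v, P W G v) ∧
  (∀ (W W' : Type) (G : W → W → Prop) (H : W' → W' → Prop) (ι : W' → W),
      Function.Injective ι → (∀ a b, H a b → G (ι a) (ι b)) →
      ∀ v, P W' H v → P W G (ι v))

section Aux

open Finset

variable {W : Type} [Fintype W] [DecidableEq W]

open Classical in
noncomputable def outN (G : W → W → Prop) (v : W) : Finset W :=
  Finset.univ.filter (fun u => G v u)

lemma mem_outN {G : W → W → Prop} {v u : W} : u ∈ outN G v ↔ G v u := by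
  simp [outN]

lemma outDeg_eq (G : W → W → Prop) (v : W) : outDeg G v = (outN G v).card := by
  classical
  simp [outDeg, outN, Nat.card_eq_fintype_card, Fintype.card_subtype]

lemma outDeg_restrict (G : W → W → Prop) (A : Finset W) (v : ↥A) :
    outDeg (fun a b : ↥A => G a.1 b.1) v = ((outN G v.1) ∩ A).card := by
  classical
  rw [outDeg, Nat.card_congr (Equiv.subtypeSubtypeEquivSubtypeInter (· ∈ A) (G v.1))]
  rw [Nat.card_eq_fintype_card, Fintype.card_subtype]
  congr 1
  ext x
  simp [outN, and_comm]

open Classical in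
noncomputable def PVerts (P : ∀ W : Type, (W → W → Prop) → W → Prop) (G : W → W → Prop) :
    Finset W := Finset.univ.filter (fun v => P W G v)

lemma mem_PVerts {P : ∀ W : Type, (W → W → Prop) → W → Prop} {G : W → W → Prop} {v : W} :
    v ∈ PVerts P G ↔ P W G v := by simp [PVerts]

open Classical in
noncomputable def lvl (G : W → W → Prop) (S : Finset W) (c : ℕ) : ℕ → Finset W
  | 0 => S
  | (i+1) => Finset.univ.filter (fun v => c ≤ ((outN G v) ∩ lvl G S c i).card)

lemma mem_lvl_succ {G : W → W → Prop} {S : Finset W} {c i : ℕ} {v : W} :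
    v ∈ lvl G S c (i+1) ↔ c ≤ ((outN G v) ∩ lvl G S c i).card := by
  simp [lvl]

lemma reachLvl (P : ∀ W : Type, (W → W → Prop) → W → Prop) (d c : ℕ)
    (hP : DeltaCommon P d) (G : W → W → Prop) (hG : Loopless G) :
    ∀ i (A : Finset W), A.Nonempty →
      (∀ v ∈ A, d + i * c ≤ ((outN G v) ∩ A).card) →
      ∃ v, v ∈ A ∧ v ∈ lvl G (PVerts P G) c i := by
  intro i
  induction i with
  | zero =>
    intro A hA hd
    obtain ⟨x, hx⟩ := hA
    have hne : Nonempty ↥A := ⟨⟨x, hx⟩⟩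
    obtain ⟨v, hv⟩ := hP.1 ↥A inferInstance hne (fun a b : ↥A => G a.1 b.1)
      (fun a => hG a.1)
      (fun a => by
        rw [outDeg_restrict]
        have := hd a.1 a.2
        omega)
    have hPv : P W G v.1 := hP.2 W ↥A G (fun a b : ↥A => G a.1 b.1) Subtype.val
      Subtype.val_injective (fun a b h => h) v hv
    exact ⟨v.1, v.2, by simp [lvl, mem_PVerts, hPv]⟩
  | succ i ih =>
    intro A hA hd
    by_contra hcon
    push_neg at hcon
    have hsmall : ∀ v ∈ A, ((outN G v) ∩ lvl G (PVerts P G) c i).card < c := by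
      intro v hv
      by_contra hle
      push_neg at hle
      exact hcon v hv (mem_lvl_succ.mpr hle)
    rcases (A \ lvl G (PVerts P G) c i).eq_empty_or_nonempty with hemp | hne
    · -- A ⊆ lvl i
      have hsub : A ⊆ lvl G (PVerts P G) c i := by
        intro x hx
        by_contra hxn
        exact (Finset.eq_empty_iff_forall_notMem.mp hemp x) (Finset.mem_sdiff.mpr ⟨hx, hxn⟩)
      obtain ⟨x, hx⟩ := hA
      have h1 : ((outN G x) ∩ A).card ≤ ((outN G x) ∩ lvl G (PVerts P G) c i).card :=
        Finset.card_le_card (Finset.inter_subset_inter_left hsub)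
      have h2 := hd x hx
      have h3 := hsmall x hx
      have : (i+1) * c = i * c + c := by ring
      omega
    · -- recurse on A' = A \ lvl i
      have hstep : ∀ v ∈ A \ lvl G (PVerts P G) c i,
          d + i * c ≤ ((outN G v) ∩ (A \ lvl G (PVerts P G) c i)).card := by
        intro v hv
        have hvA : v ∈ A := (Finset.mem_sdiff.mp hv).1
        have heq : ((outN G v) ∩ A).card =
            (((outN G v) ∩ A) \ lvl G (PVerts P G) c i).card
            + ((outN G v) ∩ A ∩ lvl G (PVerts P G) c i).card :=
          (Finset.card_sdiff_add_card_inter _ _).symm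
        have hss : (((outN G v) ∩ A) \ lvl G (PVerts P G) c i)
            ⊆ ((outN G v) ∩ (A \ lvl G (PVerts P G) c i)) := by
          intro x hx
          simp only [Finset.mem_sdiff, Finset.mem_inter] at hx ⊢
          tauto
        have hss2 : ((outN G v) ∩ A ∩ lvl G (PVerts P G) c i)
            ⊆ ((outN G v) ∩ lvl G (PVerts P G) c i) := by
          intro x hx
          simp only [Finset.mem_inter] at hx ⊢
          tauto
        have h1 := Finset.card_le_card hss
        have h2 := Finset.card_le_card hss2
        have h3 := hsmall v hvA
        have h4 := hd v hvA
        have : (i+1) * c = i * c + c := by ring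
        omega
      obtain ⟨v, hv1, hv2⟩ := ih (A \ lvl G (PVerts P G) c i) hne hstep
      exact (Finset.mem_sdiff.mp hv1).2 hv2

lemma exists_sdr {ι : Type} [Fintype ι] (C : ι → Finset W) (F : Finset W)
    (h : ∀ p, F.card + Fintype.card ι ≤ (C p).card) :
    ∃ ψ : ι → W, Function.Injective ψ ∧ ∀ p, ψ p ∈ C p ∧ ψ p ∉ F := by
  classical
  have hall : ∀ s : Finset ι, s.card ≤ (s.biUnion (fun p => C p \ F)).card := by
    intro s
    rcases s.eq_empty_or_nonempty with rfl | ⟨x, hx⟩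
    · simp
    · have h1 : s.card ≤ Fintype.card ι := by
        simpa using Finset.card_le_card (Finset.subset_univ s)
      have h2 : (C x \ F).card ≤ (s.biUnion (fun p => C p \ F)).card :=
        Finset.card_le_card (Finset.subset_biUnion_of_mem (fun p => C p \ F) hx)
      have h3 : (C x).card - F.card ≤ (C x \ F).card := Finset.le_card_sdiff _ _
      have h4 := h x
      omega
  obtain ⟨f, hinj, hf⟩ :=
    (Finset.all_card_le_biUnion_card_iff_exists_injective (fun p => C p \ F)).1 hall
  exact ⟨f, hinj, fun p => by
    have := hf p
    rw [Finset.mem_sdiff] at this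
    exact this⟩

noncomputable instance fintypeLenEq (ℓ n : ℕ) : Fintype {m : List (Fin ℓ) // m.length = n} :=
  inferInstanceAs (Fintype (List.Vector (Fin ℓ) n))

lemma card_len_eq (ℓ n : ℕ) :
    @Fintype.card {m : List (Fin ℓ) // m.length = n} (fintypeLenEq ℓ n) = ℓ ^ n := by
  have : @Fintype.card {m : List (Fin ℓ) // m.length = n} (fintypeLenEq ℓ n)
      = Fintype.card (List.Vector (Fin ℓ) n) := @Fintype.card_congr _ _ (fintypeLenEq ℓ n) _ (Equiv.refl _)
  rw [this, card_vector, Fintype.card_fin]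

lemma card_len_eq' (ℓ n : ℕ) :
    Fintype.card {m : List (Fin ℓ) // m.length = n} = ℓ ^ n := card_len_eq ℓ n

lemma treesize_le (ℓ k : ℕ) (hℓ : 2 ≤ ℓ) :
    ∑ i ∈ Finset.range (k+1), ℓ^i ≤ 2 * ℓ ^ k := by
  induction k with
  | zero => norm_num
  | succ k ih =>
    rw [Finset.sum_range_succ]
    have h1 : 2 * ℓ ^ k ≤ ℓ * ℓ ^ k := Nat.mul_le_mul_right _ hℓ
    have h2 : ℓ ^ (k+1) = ℓ * ℓ ^ k := by ring
    omega

end Aux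

/-- If `𝒫` is `δ⁺`-common with threshold `d` and `δ⁺(G) ≥ d + 2kℓ^k` (`k ≥ 1, ℓ ≥ 2`),
then `G` contains a copy of the complete `ℓ`-ary out-arborescence of depth `k`
(vertices: lists over `Fin ℓ` of length at most `k`, edges given by appending a letter)
all of whose leaves satisfy `𝒫` in `G`. -/


theorem stmt9 (P : ∀ W : Type, (W → W → Prop) → W → Prop) (d k ℓ : ℕ)
    (hP : DeltaCommon P d) (hk : 1 ≤ k) (hℓ : 2 ≤ ℓ)
    {W : Type} [Finite W] [Nonempty W] (G : W → W → Prop) (hG : Loopless G)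
    (hdeg : ∀ v, d + 2 * k * ℓ ^ k ≤ outDeg G v) :
    ∃ φ : {l : List (Fin ℓ) // l.length ≤ k} → W, Function.Injective φ ∧
      (∀ u v : {l : List (Fin ℓ) // l.length ≤ k},
        (∃ a : Fin ℓ, (v : List (Fin ℓ)) = u.1 ++ [a]) → G (φ u) (φ v)) ∧
      (∀ l : {l : List (Fin ℓ) // l.length ≤ k}, l.1.length = k → P W G (φ l)) := by
  classical
  cases nonempty_fintype W
  set c := 2 * ℓ ^ k with hc
  have htree : ∑ i ∈ Finset.range (k+1), ℓ^i ≤ c := treesize_le ℓ k hℓ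
  have key : ∀ j, j ≤ k →
      ∃ (φ : {l : List (Fin ℓ) // l.length ≤ j} → W) (F : Finset W),
        Function.Injective φ ∧
        (∀ u v : {l : List (Fin ℓ) // l.length ≤ j},
          (∃ a : Fin ℓ, (v : List (Fin ℓ)) = u.1 ++ [a]) → G (φ u) (φ v)) ∧
        (∀ l, φ l ∈ lvl G (PVerts P G) c (k - l.1.length)) ∧
        (∀ l, φ l ∈ F) ∧
        F.card ≤ ∑ i ∈ Finset.range (j+1), ℓ^i := by
    intro j
    induction j with
    | zero =>
      intro _
      have hroot : ∃ v, v ∈ Finset.univ ∧ v ∈ lvl G (PVerts P G) c k := by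
        apply reachLvl P d c hP G hG k Finset.univ
          ⟨Classical.arbitrary W, Finset.mem_univ _⟩
        intro v _
        rw [Finset.inter_univ]
        have h1 := hdeg v
        rw [outDeg_eq] at h1
        have h2 : 2 * k * ℓ ^ k = k * c := by rw [hc]; ring
        omega
      obtain ⟨r, _, hr⟩ := hroot
      refine ⟨fun _ => r, {r}, ?_, ?_, ?_, ?_, ?_⟩
      · intro u v _
        apply Subtype.ext
        have hu : u.1 = [] := List.length_eq_zero_iff.mp (Nat.le_zero.mp u.2)
        have hv : v.1 = [] := List.length_eq_zero_iff.mp (Nat.le_zero.mp v.2)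
        rw [hu, hv]
      · rintro u v ⟨a, ha⟩
        exfalso
        have hv : v.1 = [] := List.length_eq_zero_iff.mp (Nat.le_zero.mp v.2)
        rw [hv] at ha
        exact List.cons_ne_nil a [] (List.append_eq_nil_iff.mp ha.symm).2
      · intro l
        have hl : l.1.length = 0 := Nat.le_zero.mp l.2
        rw [hl, Nat.sub_zero]
        exact hr
      · intro l
        exact Finset.mem_singleton_self r
      · simp
    | succ j ih =>
      intro hjk
      obtain ⟨φ, F, hinj, hedge, hlvl, hmemF, hcard⟩ := ih (Nat.le_of_succ_le hjk)
      have hcardι : Fintype.card {m : List (Fin ℓ) // m.length = j+1} = ℓ^(j+1) :=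
        card_len_eq' ℓ (j+1)
      have hdl : ∀ m : {m : List (Fin ℓ) // m.length = j+1}, m.1.dropLast.length ≤ j := by
        intro m
        rw [List.length_dropLast, m.2]
        omega
      obtain ⟨ψ, hψinj, hψ⟩ := exists_sdr
        (fun m : {m : List (Fin ℓ) // m.length = j+1} =>
          (outN G (φ ⟨m.1.dropLast, hdl m⟩)) ∩ lvl G (PVerts P G) c (k - (j+1))) F
        (fun m => by
          have h1 : φ ⟨m.1.dropLast, hdl m⟩ ∈
              lvl G (PVerts P G) c (k - m.1.dropLast.length) := hlvl _
          have h2 : m.1.dropLast.length = j := by rw [List.length_dropLast, m.2]; omega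
          rw [h2] at h1
          have hkj : k - j = (k - (j+1)) + 1 := by omega
          rw [hkj] at h1
          have h3 := mem_lvl_succ.mp h1
          have h4 : ∑ i ∈ Finset.range (j+2), ℓ^i ≤ ∑ i ∈ Finset.range (k+1), ℓ^i :=
            Finset.sum_le_sum_of_subset (Finset.range_subset_range.mpr (by omega))
          rw [Finset.sum_range_succ] at h4
          rw [hcardι]
          omega)
      refine ⟨fun l => if h : l.1.length ≤ j then φ ⟨l.1, h⟩
          else ψ ⟨l.1, Nat.le_antisymm l.2 (Nat.not_le.mp h)⟩,
        F ∪ Finset.univ.image ψ, ?_, ?_, ?_, ?_, ?_⟩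
      · intro u v huv
        dsimp only at huv
        split_ifs at huv with hu hv hv
        · exact Subtype.ext (Subtype.mk_eq_mk.mp (hinj huv))

        · exfalso
          have hm := hmemF ⟨u.1, hu⟩
          rw [huv] at hm
          exact (hψ _).2 hm
        · exfalso
          have hm := hmemF ⟨v.1, hv⟩
          rw [← huv] at hm
          exact (hψ _).2 hm
        · exact Subtype.ext (Subtype.mk_eq_mk.mp (hψinj huv))
      · rintro u v ⟨a, ha⟩
        have hvlen : v.1.length = u.1.length + 1 := by rw [ha]; simp
        have hv2 := v.2
        dsimp only
        by_cases hv : v.1.length ≤ j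
        · have hu : u.1.length ≤ j := by omega
          rw [dif_pos hu, dif_pos hv]
          exact hedge ⟨u.1, hu⟩ ⟨v.1, hv⟩ ⟨a, ha⟩
        · have hu : u.1.length ≤ j := by omega
          rw [dif_pos hu, dif_neg hv]
          have hgen : ∀ m : {m : List (Fin ℓ) // m.length = j+1},
              m.1 = u.1 ++ [a] → G (φ ⟨u.1, hu⟩) (ψ m) := by
            intro m hm
            have hG1 : G (φ ⟨m.1.dropLast, hdl m⟩) (ψ m) :=
              mem_outN.mp (Finset.mem_inter.mp (hψ m).1).1
            have heq2 : (⟨m.1.dropLast, hdl m⟩ : {l : List (Fin ℓ) // l.length ≤ j})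
                = ⟨u.1, hu⟩ := Subtype.ext (by
                  show (↑m : List (Fin ℓ)).dropLast = ↑u
                  rw [hm, List.dropLast_concat])
            rwa [heq2] at hG1
          exact hgen _ ha
      · intro l
        dsimp only
        by_cases h : l.1.length ≤ j
        · rw [dif_pos h]
          exact hlvl ⟨l.1, h⟩
        · rw [dif_neg h]
          have hl : l.1.length = j + 1 := Nat.le_antisymm l.2 (Nat.not_le.mp h)
          have hidx : k - l.1.length = k - (j+1) := by rw [hl]
          rw [hidx]
          exact (Finset.mem_inter.mp (hψ _).1).2
      · intro l
        dsimp only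
        by_cases h : l.1.length ≤ j
        · rw [dif_pos h]
          exact Finset.mem_union_left _ (hmemF _)
        · rw [dif_neg h]
          exact Finset.mem_union_right _ (Finset.mem_image_of_mem ψ (Finset.mem_univ _))
      · have hu1 := Finset.card_union_le F (Finset.univ.image ψ)
        have hu2 := Finset.card_image_le (s := (Finset.univ : Finset {m : List (Fin ℓ) // m.length = j+1})) (f := ψ)
        rw [Finset.card_univ, hcardι] at hu2
        rw [Finset.sum_range_succ]
        omega
  obtain ⟨φ, F, hinj, hedge, hlvl, _, _⟩ := key k le_rfl
  refine ⟨φ, hinj, hedge, ?_⟩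
  intro l hl
  have h1 := hlvl l
  rw [hl, Nat.sub_self] at h1
  exact mem_PVerts.mp h1
end

section
/- Let G be a digraph, 𝒫 a δ⁺-common property with threshold d(𝒫), k ≥ 1, ℓ ≥ 2, and suppose δ⁺(G) ≥ d(𝒫) + 2kℓ^k. Define Γ(0) = {v : v satisfies 𝒫 in G} and Γ(i) = {v : v has at least 2ℓ^k out-neighbours in Γ(i−1)} for 1 ≤ i ≤ k. Then Γ(k) is nonempty. -/
/-- With `Γ(0)` the vertices satisfying `𝒫` and `Γ(i)` the vertices with at least
`2ℓ^k` out-neighbours in `Γ(i-1)`, if `δ⁺(G) ≥ d(𝒫) + 2kℓ^k` then `Γ(k)` is nonempty. -/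
theorem stmt10 (P : ∀ W : Type, (W → W → Prop) → W → Prop) (d k ℓ : ℕ)
    (hP : DeltaCommon P d) (hk : 1 ≤ k) (hℓ : 2 ≤ ℓ)
    {W : Type} [Finite W] [Nonempty W] (G : W → W → Prop) (hG : Loopless G)
    (hdeg : ∀ v, d + 2 * k * ℓ ^ k ≤ outDeg G v)
    (Γ : ℕ → Set W)
    (hΓ0 : Γ 0 = {v | P W G v})
    (hΓ : ∀ i, 1 ≤ i → i ≤ k →
      Γ i = {v | 2 * ℓ ^ k ≤ Nat.card {u : W // G v u ∧ u ∈ Γ (i - 1)}}) :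
    (Γ k).Nonempty := by
  classical
  cases nonempty_fintype W
  by_contra hne
  rw [Set.not_nonempty_iff_eq_empty] at hne
  -- translate `Nat.card` of subtypes into `Finset.card`
  have hcard : ∀ (p : W → Prop), Nat.card {u : W // p u} = (Finset.univ.filter p).card := by
    intro p
    rw [Nat.card_eq_fintype_card, Fintype.card_subtype]
  set N : W → Finset W := fun v => Finset.univ.filter (fun u => G v u) with hN
  have houtdeg : ∀ v, outDeg G v = (N v).card := fun v => hcard _
  have hpow : 1 ≤ ℓ ^ k := Nat.one_le_pow _ _ (by omega)
  -- membership criterion for Γ (i+1)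
  have hmem : ∀ i, i < k → ∀ v : W,
      v ∈ Γ (i + 1) ↔ 2 * ℓ ^ k ≤ ((N v).filter (fun u => u ∈ Γ i)).card := by
    intro i hi v
    rw [hΓ (i + 1) (by omega) (by omega)]
    simp only [Set.mem_setOf_eq, Nat.add_sub_cancel]
    have he : Nat.card {u : W // G v u ∧ u ∈ Γ i} = ((N v).filter (fun u => u ∈ Γ i)).card := by
      rw [hcard]
      congr 1
      ext u
      simp only [hN, Finset.mem_filter, Finset.mem_univ, true_and]
      try tauto
    rw [he]
  -- the counting lemma
  have count : ∀ t, ∀ v : W, (∀ i, t ≤ i → i < k → v ∉ Γ (i + 1)) →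
      ((N v).filter (fun u => ∃ i, t ≤ i ∧ i < k ∧ u ∈ Γ i)).card < 2 * k * ℓ ^ k := by
    intro t v hv
    have hsub : (N v).filter (fun u => ∃ i, t ≤ i ∧ i < k ∧ u ∈ Γ i) ⊆
        (Finset.Ico t k).biUnion (fun i => (N v).filter (fun u => u ∈ Γ i)) := by
      intro u hu
      simp only [Finset.mem_filter] at hu
      obtain ⟨hu1, i, h1, h2, h3⟩ := hu
      exact Finset.mem_biUnion.2 ⟨i, Finset.mem_Ico.2 ⟨h1, h2⟩, Finset.mem_filter.2 ⟨hu1, h3⟩⟩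
    calc ((N v).filter (fun u => ∃ i, t ≤ i ∧ i < k ∧ u ∈ Γ i)).card
        ≤ ((Finset.Ico t k).biUnion (fun i => (N v).filter (fun u => u ∈ Γ i))).card :=
          Finset.card_le_card hsub
      _ ≤ ∑ i ∈ Finset.Ico t k, ((N v).filter (fun u => u ∈ Γ i)).card :=
          Finset.card_biUnion_le
      _ ≤ ∑ _i ∈ Finset.Ico t k, (2 * ℓ ^ k - 1) := by
          apply Finset.sum_le_sum
          intro i hi
          rw [Finset.mem_Ico] at hi
          have := hv i hi.1 hi.2
          rw [hmem i hi.2 v] at this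
          omega
      _ = (k - t) * (2 * ℓ ^ k - 1) := by
          rw [Finset.sum_const, Nat.card_Ico, smul_eq_mul]
      _ ≤ k * (2 * ℓ ^ k - 1) := Nat.mul_le_mul_right _ (Nat.sub_le _ _)
      _ < 2 * k * ℓ ^ k := by
          have h1 : k * (2 * ℓ ^ k - 1) < k * (2 * ℓ ^ k) :=
            mul_lt_mul_of_pos_left (by omega) (by omega)
          calc k * (2 * ℓ ^ k - 1) < k * (2 * ℓ ^ k) := h1
            _ = 2 * k * ℓ ^ k := by ring
  -- the covering statements C t
  set C : ℕ → Prop := fun t => ∀ v : W, ∃ i, t ≤ i ∧ i < k ∧ v ∈ Γ i with hC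
  have step : ∀ t, t < k → C t → C (t + 1) := by
    intro t ht hCt v
    by_cases hbad : ∀ i, t ≤ i → i < k → v ∉ Γ (i + 1)
    · exfalso
      have hfull : (N v).filter (fun u => ∃ i, t ≤ i ∧ i < k ∧ u ∈ Γ i) = N v :=
        Finset.filter_true_of_mem (fun u _ => hCt u)
      have := count t v hbad
      rw [hfull] at this
      have hd := hdeg v
      rw [houtdeg] at hd
      omega
    · push_neg at hbad
      obtain ⟨i, h1, h2, h3⟩ := hbad
      rcases Nat.lt_or_ge (i + 1) k with h | h
      · exact ⟨i + 1, by omega, h, h3⟩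
      · exfalso
        have : i + 1 = k := by omega
        rw [this, hne] at h3
        exact h3
  have hCk : ¬ C k := by
    intro h
    obtain ⟨v⟩ := (inferInstance : Nonempty W)
    obtain ⟨i, h1, h2, _⟩ := h v
    omega
  have hnotC : ∀ j, ¬ C (k - j) := by
    intro j
    induction j with
    | zero => simpa using hCk
    | succ j ih =>
      intro hc
      rcases Nat.lt_or_ge j k with hj | hj
      · have h1 : k - (j + 1) < k := by omega
        have h2 : k - (j + 1) + 1 = k - j := by omega
        exact ih (h2 ▸ step _ h1 hc)
      · have h2 : k - (j + 1) = k - j := by omega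
        exact ih (h2 ▸ hc)
  have hnotC0 : ¬ C 0 := by
    have := hnotC k
    simpa using this
  rw [hC] at hnotC0
  obtain ⟨v₀, hv₀⟩ := not_forall.1 hnotC0
  push_neg at hv₀
  -- the induced subgraph on B
  set B : Set W := {v | ∀ i, i < k → v ∉ Γ i} with hB
  have hv₀B : v₀ ∈ B := by
    intro i hik hvi
    exact hv₀ i (Nat.zero_le i) hik hvi
  set H : ↥B → ↥B → Prop := fun a b => G a b with hH
  have hHloop : Loopless H := fun a ha => hG a ha
  have hHdeg : ∀ b : ↥B, d ≤ outDeg H b := by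
    intro b
    have hcardH : outDeg H b = ((N (b : W)).filter (fun u => u ∈ B)).card := by
      unfold outDeg
      rw [Nat.card_congr (Equiv.subtypeSubtypeEquivSubtypeInter (fun u => u ∈ B)
        (fun u => G (b : W) u)), hcard]
      congr 1
      ext u
      simp only [hN, Finset.mem_filter, Finset.mem_univ, true_and]
      tauto
    have hnotB : ∀ i, 0 ≤ i → i < k → (b : W) ∉ Γ (i + 1) := by
      intro i _ hik
      rcases Nat.lt_or_ge (i + 1) k with h | h
      · exact b.2 (i + 1) h
      · have : i + 1 = k := by omega
        rw [this, hne]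
        exact id
    have hout := count 0 (b : W) hnotB
    have hsplit := Finset.card_filter_add_card_filter_not
      (s := N (b : W)) (p := fun u => u ∈ B)
    have hsub2 : (N (b : W)).filter (fun u => u ∉ B) ⊆
        (N (b : W)).filter (fun u => ∃ i, 0 ≤ i ∧ i < k ∧ u ∈ Γ i) := by
      intro u hu
      rw [Finset.mem_filter] at hu ⊢
      refine ⟨hu.1, ?_⟩
      have : ¬ (∀ i, i < k → u ∉ Γ i) := hu.2
      push_neg at this
      obtain ⟨i, h1, h2⟩ := this
      exact ⟨i, Nat.zero_le i, h1, h2⟩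
    have hle2 : ((N (b : W)).filter (fun u => u ∉ B)).card < 2 * k * ℓ ^ k :=
      lt_of_le_of_lt (Finset.card_le_card hsub2) hout
    have hd := hdeg (b : W)
    rw [houtdeg] at hd
    rw [hcardH]
    omega
  have hBfin : Finite ↥B := Subtype.finite
  have hBne : Nonempty ↥B := ⟨⟨v₀, hv₀B⟩⟩
  obtain ⟨w, hw⟩ := hP.1 ↥B hBfin hBne H hHloop hHdeg
  have hPw : P W G (w : W) :=
    hP.2 W ↥B G H Subtype.val Subtype.val_injective (fun a b h => h) w hw
  have : (w : W) ∈ Γ 0 := by rw [hΓ0]; exact hPw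
  exact w.2 0 hk this
end

section
/- If z and z' are vectors in {0,1}^{k+1} (indexed 0,…,k) with z' strictly greater than z in the lexicographic order determined by the highest differing coordinate, and z'_k = 0, then there exists an index i ≤ k−1 with z'_i = 1 and z_{i+1} = 0. -/
/-- If `z ≺ z'` in the lexicographic order on `{0,1}^{k+1}` and `z'_k = 0`, then there
is an index `i ≤ k - 1` with `z'_i = 1` and `z_{i+1} = 0`. -/
theorem stmt11 (k : ℕ) (z z' : ℕ → Bool)
    (hlt : ∃ i ≤ k, z i = false ∧ z' i = true ∧ ∀ j, i < j → j ≤ k → z j = z' j)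
    (hk : z' k = false) :
    ∃ i ≤ k - 1, z' i = true ∧ z (i + 1) = false := by
  obtain ⟨i₀, hi₀k, hz0, hz'1, hag⟩ := hlt
  have hi₀lt : i₀ < k := by
    rcases lt_or_eq_of_le hi₀k with h | h
    · exact h
    · exfalso; rw [h, hk] at hz'1; exact Bool.false_ne_true hz'1
  have hi₀le : i₀ ≤ k - 1 := Nat.le_sub_one_of_lt hi₀lt
  set P : ℕ → Prop := fun m => z' m = true with hP
  set i := Nat.findGreatest P (k - 1) with hi
  have hiP : P i := Nat.findGreatest_spec hi₀le hz'1
  have hile : i ≤ k - 1 := Nat.findGreatest_le _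
  have hige : i₀ ≤ i := Nat.le_findGreatest hi₀le hz'1
  refine ⟨i, hile, hiP, ?_⟩
  have hik : i + 1 ≤ k := by omega
  have hz'next : z' (i + 1) = false := by
    rcases lt_or_eq_of_le hile with h | h
    · have : ¬ P (i + 1) := Nat.findGreatest_is_greatest (Nat.lt_succ_self i) (by omega)
      simpa [hP, Bool.not_eq_true] using this
    · have : i + 1 = k := by omega
      rw [this]; exact hk
  rw [hag (i + 1) (by omega) hik, hz'next]
end

section
/- Let k ≥ 1 and ℓ ≥ 2, and let f(k,h) be any function such that every digraph with minimum out-degree ≥ f(k,h) contains S⁻_{k,h} as a subgraph. Then every digraph G with δ⁺(G) ≥ f(k, 3kℓ^{k+1}) + 2kℓ^k contains T(k,ℓ) as a subgraph. -/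
/-- Vertices of `S⁻_{k,h}`, the `(k-1)`-subdivision of the in-star with `h` leaves:
a centre together with, for each of the `h` rays, `k` vertices indexed by their
distance minus one from the centre. -/
def SpiderVert (k h : ℕ) : Type := Unit ⊕ Fin h × Fin k

/-- The edge relation of `S⁻_{k,h}`: each ray is a directed path of length `k`
into the centre. -/
def SpiderAdj (k h : ℕ) : SpiderVert k h → SpiderVert k h → Prop
  | Sum.inr (r, p), Sum.inr (r', p') => r = r' ∧ (p : ℕ) = (p' : ℕ) + 1
  | Sum.inr (_, p), Sum.inl _ => (p : ℕ) = 0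
  | _, _ => False
open Finset
open scoped Classical

variable {W : Type*}

/-- The vertices of `B⁺_{j,ℓ}`. -/
def words (ℓ : ℕ) : ℕ → Finset (List (Fin ℓ))
  | 0 => {[]}
  | j + 1 => insert [] ((univ ×ˢ words ℓ j).image fun p => p.1 :: p.2)

@[simp]
theorem mem_words {ℓ j : ℕ} {l : List (Fin ℓ)} : l ∈ words ℓ j ↔ l.length ≤ j := by
  induction j generalizing l with
  | zero => simp [words]
  | succ j ih => cases l <;> simp [words, ih]

theorem card_words_succ (ℓ j : ℕ) : #(words ℓ (j + 1)) = ℓ * #(words ℓ j) + 1 := by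
  have hcons : Function.Injective fun p : Fin ℓ × List (Fin ℓ) => p.1 :: p.2 :=
    fun p q h => Prod.ext (List.cons.inj h).1 (List.cons.inj h).2
  rw [words, card_insert_of_notMem (by simp), card_image_of_injective _ hcons, card_product,
    card_univ, Fintype.card_fin]

theorem card_words_lt {ℓ : ℕ} (hℓ : 2 ≤ ℓ) (j : ℕ) : #(words ℓ j) < 2 * ℓ ^ j := by
  induction j with
  | zero => simp [words]
  | succ j ih => rw [card_words_succ, pow_succ]; nlinarith

theorem card_words_add_le {k ℓ : ℕ} (hk : 1 ≤ k) (hℓ : 2 ≤ ℓ) :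
    #(words ℓ k) + ℓ ^ k * (ℓ * k) ≤ 3 * k * ℓ ^ (k + 1) := by
  have h1 := card_words_lt hℓ k
  have h2 : ℓ ^ k ≤ k * ℓ ^ (k + 1) :=
    (Nat.pow_le_pow_right (by omega) k.le_succ).trans (Nat.le_mul_of_pos_left _ hk)
  rw [pow_succ] at h2 ⊢
  nlinarith

theorem exists_pairwise_disjoint_fin {α β : Type*} {S : α → Finset β} {b n : ℕ}
    (hS : ∀ x, #(S x) ≤ b) :
    ∀ {r : ℕ} {P : Fin r → α → Prop},
      (∀ i (F : Finset β), #F + b ≤ n → ∃ x, P i x ∧ Disjoint (S x) F) →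
      ∀ F : Finset β, #F + r * b ≤ n →
        ∃ x : Fin r → α, (∀ i, P i (x i) ∧ Disjoint (S (x i)) F) ∧
          Pairwise fun i j => Disjoint (S (x i)) (S (x j))
  | 0, _, _, _, _ => ⟨Fin.elim0, fun i => i.elim0, fun i => i.elim0⟩
  | r + 1, P, h, F, hF => by
    rw [add_one_mul] at hF
    obtain ⟨x, hx, hdisj⟩ := exists_pairwise_disjoint_fin hS (P := fun i => P i.castSucc)
      (fun i => h i.castSucc) F (by omega)
    set F' := F ∪ univ.biUnion fun i => S (x i)
    have hF' : #F' + b ≤ n := by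
      have hunion : #(univ.biUnion fun i => S (x i)) ≤ r * b := by
        simpa using card_biUnion_le_card_mul univ (fun i => S (x i)) b fun i _ => hS _
      have : #F' ≤ #F + #(univ.biUnion fun i => S (x i)) := card_union_le _ _
      omega
    obtain ⟨y, hy, hyF'⟩ := h (Fin.last r) F' hF'
    have hSx : ∀ i, S (x i) ⊆ F' := fun i =>
      subset_union_right.trans' (subset_biUnion_of_mem (fun i => S (x i)) (mem_univ i))
    refine ⟨Fin.snoc x y, fun i => ?_, fun i j hij => ?_⟩
    · induction i using Fin.lastCases with
      | last => simpa using ⟨hy, hyF'.mono_right subset_union_left⟩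
      | cast i => simpa using hx i
    · induction i using Fin.lastCases with
      | last =>
        induction j using Fin.lastCases with
        | last => exact absurd rfl hij
        | cast j => simpa using hyF'.mono_right (hSx j)
      | cast i =>
        induction j using Fin.lastCases with
        | last => simpa using (hyF'.mono_right (hSx i)).symm
        | cast j => simpa using hdisj (fun h => hij (congrArg _ h))

theorem exists_pairwise_disjoint {ι α β : Type*} [Fintype ι] {P : ι → α → Prop}
    {S : α → Finset β} {b n : ℕ} (hS : ∀ x, #(S x) ≤ b)
    (h : ∀ i (F : Finset β), #F + b ≤ n → ∃ x, P i x ∧ Disjoint (S x) F)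
    (F : Finset β) (hF : #F + Fintype.card ι * b ≤ n) :
    ∃ x : ι → α, (∀ i, P i (x i) ∧ Disjoint (S (x i)) F) ∧
      Pairwise fun i j => Disjoint (S (x i)) (S (x j)) := by
  let e := Fintype.equivFin ι
  obtain ⟨x, hx, hdisj⟩ :=
    exists_pairwise_disjoint_fin hS (P := fun i => P (e.symm i)) (fun i => h _) F hF
  exact ⟨x ∘ e, fun i => by simpa using hx (e i), fun i j hij => hdisj (e.injective.ne hij)⟩

section Spider

variable (G : W → W → Prop) {k h : ℕ}

def IsSpiderEmbedding (c : W) (χ : SpiderVert k h → W) : Prop :=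
  Function.Injective χ ∧ (∀ u v, SpiderAdj k h u v → G (χ u) (χ v)) ∧ χ (Sum.inl ()) = c

def IsSpiderCentre (k h : ℕ) (c : W) : Prop :=
  ∃ χ : SpiderVert k h → W, IsSpiderEmbedding G c χ

variable {G}

noncomputable def legSet (χ : SpiderVert k h → W) : Finset W :=
  univ.image fun x => χ (Sum.inr x)

theorem card_legSet_le (χ : SpiderVert k h → W) : #(legSet χ) ≤ h * k :=
  card_image_le.trans (by simp)

def SpiderVert.mapRays {ℓ : ℕ} (e : Fin ℓ → Fin h) : SpiderVert k ℓ → SpiderVert k h :=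
  Sum.map id (Prod.map e id)

theorem SpiderVert.mapRays_injective {ℓ : ℕ} {e : Fin ℓ → Fin h} (he : Function.Injective e) :
    Function.Injective (SpiderVert.mapRays (k := k) e) :=
  Sum.map_injective.2 ⟨Function.injective_id, he.prodMap Function.injective_id⟩

theorem SpiderAdj.mapRays {ℓ : ℕ} (e : Fin ℓ → Fin h) {u v : SpiderVert k ℓ}
    (huv : SpiderAdj k ℓ u v) :
    SpiderAdj k h (SpiderVert.mapRays e u) (SpiderVert.mapRays e v) := by
  rcases u with _ | ⟨r, p⟩ <;> rcases v with _ | ⟨r', p'⟩ <;>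
    simp_all [SpiderAdj, SpiderVert.mapRays]

/-- Rays are disjoint, so a forbidden set `F` meets at most `#F` of them. -/
theorem IsSpiderCentre.exists_legSet_disjoint {c : W} (hc : IsSpiderCentre G k h c) {ℓ : ℕ}
    (F : Finset W) (hF : #F + ℓ ≤ h) :
    ∃ χ : SpiderVert k ℓ → W, IsSpiderEmbedding G c χ ∧ Disjoint (legSet χ) F := by
  obtain ⟨χ, hinj, hadj, hcentre⟩ := hc
  set bad : Finset (Fin h) := {r | ∃ p, χ (Sum.inr (r, p)) ∈ F}
  have hbad : #bad ≤ #F := by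
    refine card_le_card_of_forall_subsingleton (fun r x => ∃ p, χ (Sum.inr (r, p)) = x)
      (fun r hr => ?_) fun x _ r₁ ⟨_, p₁, hp₁⟩ r₂ ⟨_, p₂, hp₂⟩ => ?_
    · obtain ⟨p, hp⟩ := (mem_filter.1 hr).2
      exact ⟨_, hp, p, rfl⟩
    · exact congrArg Prod.fst (Sum.inr_injective (hinj (hp₁.trans hp₂.symm)))
  obtain ⟨e⟩ : Nonempty (Fin ℓ ↪ (univ \ bad : Finset (Fin h))) :=
    Function.Embedding.nonempty_of_card_le (by simp; omega)
  refine ⟨χ ∘ SpiderVert.mapRays fun r => (e r).1, ⟨hinj.comp (SpiderVert.mapRays_injective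
    (Subtype.val_injective.comp e.injective)), fun u v huv => hadj _ _ (huv.mapRays _),
    hcentre⟩, disjoint_left.2 ?_⟩
  rintro _ hx hxF
  obtain ⟨⟨r, p⟩, -, rfl⟩ := mem_image.1 hx
  have := (e r).2
  simp only [bad, mem_sdiff, mem_univ, mem_filter, true_and, not_exists] at this
  exact this p hxF

end Spider

section Tree

variable (G : W → W → Prop) (k h : ℕ) {ℓ : ℕ}

/-- An embedding of `B⁺_{j,ℓ}` whose leaves are centres of copies of `S⁻_{k,h}`. -/
def IsSpiderTree (j : ℕ) (ψ : List (Fin ℓ) → W) : Prop :=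
  Set.InjOn ψ {l | l.length ≤ j} ∧ (∀ l a, l.length < j → G (ψ l) (ψ (l ++ [a]))) ∧
    ∀ l, l.length = j → IsSpiderCentre G k h (ψ l)

def IsRobustRoot (ℓ n j : ℕ) (v : W) : Prop :=
  ∀ F : Finset W, v ∉ F → #F + #(words ℓ j) ≤ n →
    ∃ ψ : List (Fin ℓ) → W, ψ [] = v ∧ IsSpiderTree G k h j ψ ∧ Disjoint ((words ℓ j).image ψ) F

def graft (v : W) (x : Fin ℓ → List (Fin ℓ) → W) : List (Fin ℓ) → W
  | [] => v
  | a :: t => x a t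

variable {G k h}

theorem isSpiderTree_graft {j : ℕ} {v : W} {x : Fin ℓ → List (Fin ℓ) → W}
    (hx : ∀ a, G v (x a []) ∧ IsSpiderTree G k h j (x a))
    (hv : ∀ a, v ∉ (words ℓ j).image (x a))
    (hdisj : Pairwise fun a b => Disjoint ((words ℓ j).image (x a)) ((words ℓ j).image (x b))) :
    IsSpiderTree G k h (j + 1) (graft v x) := by
  have hmem : ∀ a t, t.length ≤ j → x a t ∈ (words ℓ j).image (x a) :=
    fun a t ht => mem_image_of_mem _ (mem_words.2 ht)
  refine ⟨?_, fun l b hl => ?_, fun l hl => ?_⟩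
  · rintro (_ | ⟨a, t⟩) hl (_ | ⟨a', t'⟩) hl' heq
    · rfl
    · change v = x a' t' at heq
      exact absurd (heq ▸ hmem a' t' (by simpa using hl')) (hv a')
    · change x a t = v at heq
      exact absurd (heq ▸ hmem a t (by simpa using hl)) (hv a)
    · change x a t = x a' t' at heq
      simp only [Set.mem_ofPred_eq, List.length_cons, Nat.add_le_add_iff_right] at hl hl'
      obtain rfl | hne := eq_or_ne a a'
      · rw [(hx a).2.1 hl hl' heq]
      · exact (disjoint_left.1 (hdisj hne) (hmem a t hl) (heq ▸ hmem a' t' hl')).elim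
  · rcases l with _ | ⟨a, t⟩
    · exact (hx b).1
    · exact (hx a).2.2.1 t b (by simpa using hl)
  · rcases l with _ | ⟨a, t⟩
    · simp at hl
    · exact (hx a).2.2.2 t (by simpa using hl)

theorem isRobustRoot_zero (n : ℕ) {c : W} (hc : IsSpiderCentre G k h c) :
    IsRobustRoot G k h ℓ n 0 c := by
  intro F hcF _
  refine ⟨fun _ => c, rfl, ⟨fun l hl l' hl' _ => ?_, fun _ _ h => absurd h (Nat.not_lt_zero _),
    fun _ _ => hc⟩, by simpa [words] using hcF⟩
  rw [List.length_eq_zero_iff.1 (Nat.le_zero.1 hl), List.length_eq_zero_iff.1 (Nat.le_zero.1 hl')]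

/-- The `ℓ` subtrees are chosen one after another, each avoiding the ones before. -/
theorem isRobustRoot_succ {n j : ℕ} {v : W} (A : Finset W)
    (hA : ∀ u ∈ A, G v u ∧ IsRobustRoot G k h ℓ n j u) (hn : n ≤ #A) :
    IsRobustRoot G k h ℓ n (j + 1) v := by
  intro F hvF hF
  have hchild : ∀ (_ : Fin ℓ) (F' : Finset W), #F' + #(words ℓ j) ≤ n →
      ∃ ψ, (G v (ψ []) ∧ IsSpiderTree G k h j ψ) ∧ Disjoint ((words ℓ j).image ψ) F' := by
    intro _ F' hF'
    have hroot : 0 < #(words ℓ j) := card_pos.2 ⟨[], by simp⟩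
    obtain ⟨u, huA, huF'⟩ := exists_mem_notMem_of_card_lt_card (s := F') (t := A) (by omega)
    obtain ⟨ψ, rfl, hψ, hψF'⟩ := (hA u huA).2 F' huF' hF'
    exact ⟨ψ, ⟨(hA _ huA).1, hψ⟩, hψF'⟩
  obtain ⟨x, hx, hdisj⟩ := exists_pairwise_disjoint (fun _ => card_image_le) hchild (insert v F)
    (by rw [card_words_succ] at hF; simp only [Fintype.card_fin]; linarith [card_insert_le v F])
  refine ⟨graft v x, rfl, isSpiderTree_graft (fun a => (hx a).1)
    (fun a => disjoint_right.1 (hx a).2 (mem_insert_self v F)) hdisj, disjoint_left.2 ?_⟩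
  rintro _ hw hwF
  obtain ⟨(_ | ⟨a, t⟩), ht, rfl⟩ := mem_image.1 hw
  · exact hvF hwF
  · exact disjoint_left.1 (hx a).2 (mem_image_of_mem _ (by simpa using ht))
      (mem_insert_of_mem hwF)

end Tree

section Degrees

variable (G : W → W → Prop)

noncomputable def outDegWithin (X : Finset W) (v : W) : ℕ := #{u ∈ X | G v u}

theorem outDegWithin_eq_add (X : Finset W) (p : W → Prop) (v : W) :
    outDegWithin G X v = #{u ∈ X | G v u ∧ p u} + outDegWithin G {u ∈ X | ¬ p u} v := by
  rw [outDegWithin, outDegWithin, ← card_filter_add_card_filter_not (s := {u ∈ X | G v u}) p,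
    filter_filter, filter_filter, filter_filter]
  congr 2
  ext u
  simp only [mem_filter]
  tauto

theorem outDeg_subtype (X : Finset W) (v : X) :
    outDeg (fun a b : X => G a b) v = outDegWithin G X v := by
  rw [outDeg, outDegWithin, ← Nat.card_eq_finsetCard]
  exact Nat.card_congr ((Equiv.subtypeSubtypeEquivSubtypeInter (· ∈ X) (G v)).trans
    (Equiv.subtypeEquivRight fun u => by simp))

theorem outDeg_eq_outDegWithin_univ [Fintype W] (v : W) :
    outDeg G v = outDegWithin G univ v := by
  rw [outDeg, outDegWithin, Nat.card_eq_fintype_card, Fintype.card_subtype]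

end Degrees

/-- If every vertex of `X` has fewer than `n` robust out-neighbours of depth `j`, deleting them
costs each vertex fewer than `n` out-neighbours; by induction the rest of `X` contains a robust
root of depth `j`, which is absurd. -/
theorem exists_isRobustRoot (G : W → W → Prop) (k h : ℕ) {ℓ m n : ℕ}
    (hcentre : ∀ X : Finset W, X.Nonempty → (∀ v ∈ X, m ≤ outDegWithin G X v) →
      ∃ c ∈ X, IsSpiderCentre G k h c) (j : ℕ) :
    ∀ X : Finset W, X.Nonempty → (∀ v ∈ X, m + j * n ≤ outDegWithin G X v) →
      ∃ v ∈ X, IsRobustRoot G k h ℓ n j v := by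
  induction j with
  | zero =>
    intro X hX hdeg
    obtain ⟨c, hcX, hc⟩ := hcentre X hX (by simpa using hdeg)
    exact ⟨c, hcX, isRobustRoot_zero n hc⟩
  | succ j ih =>
    intro X hX hdeg
    by_contra! hnone
    set Y : Finset W := {u ∈ X | ¬ IsRobustRoot G k h ℓ n j u}
    have hY : ∀ v ∈ X, m + j * n < outDegWithin G Y v := by
      intro v hv
      have hfew : #{u ∈ X | G v u ∧ IsRobustRoot G k h ℓ n j u} < n := by
        by_contra! hmany
        exact hnone v hv (isRobustRoot_succ _ (fun u hu => (mem_filter.1 hu).2) hmany)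
      have := outDegWithin_eq_add G X (IsRobustRoot G k h ℓ n j) v
      linarith [hdeg v hv]
    obtain ⟨v, hv⟩ := hX
    have hYne : Y.Nonempty := (card_pos.1 (Nat.zero_lt_of_lt (hY v hv))).mono (filter_subset _ _)
    obtain ⟨w, hwY, hw⟩ := ih Y hYne fun v hv => (hY v (mem_filter.1 hv).1).le
    exact (mem_filter.1 hwY).2 hw

section Assembly

variable {G : W → W → Prop} {k ℓ : ℕ}

theorem containsSub_tAdj_of_legs {ψ : List (Fin ℓ) → W}
    {χ : List.Vector (Fin ℓ) k → SpiderVert k ℓ → W}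
    (hψinj : Set.InjOn ψ {l | l.length ≤ k})
    (hψadj : ∀ l a, l.length < k → G (ψ l) (ψ (l ++ [a])))
    (hχ : ∀ l, IsSpiderEmbedding G (ψ l.1) (χ l))
    (hχψ : ∀ l, Disjoint (legSet (χ l)) ((words ℓ k).image ψ))
    (hχχ : Pairwise fun l l' => Disjoint (legSet (χ l)) (legSet (χ l'))) :
    ContainsSub (TAdj k ℓ) G := by
  have hleg : ∀ l x, χ l (Sum.inr x) ∈ legSet (χ l) := fun l x => mem_image_of_mem _ (mem_univ x)
  have hnode : ∀ u : {l : List (Fin ℓ) // l.length ≤ k}, ψ u ∈ (words ℓ k).image ψ :=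
    fun u => mem_image_of_mem _ (mem_words.2 u.2)
  refine ⟨fun
    | Sum.inl u => ψ u
    | Sum.inr (l, x) => χ l (Sum.inr x), ?_, ?_⟩
  · rintro (u | ⟨l, x⟩) (u' | ⟨l', x'⟩) heq
    · exact congrArg Sum.inl (Subtype.ext (hψinj u.2 u'.2 heq))
    · change ψ u = χ l' (Sum.inr x') at heq
      exact absurd (hnode u) (disjoint_left.1 (hχψ l') (heq ▸ hleg l' x'))
    · change χ l (Sum.inr x) = ψ u' at heq
      exact absurd (hnode u') (disjoint_left.1 (hχψ l) (heq ▸ hleg l x))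
    · change χ l (Sum.inr x) = χ l' (Sum.inr x') at heq
      obtain rfl | hne := eq_or_ne l l'
      · cases (hχ l).1 heq
        rfl
      · exact absurd (heq ▸ hleg l' x') (disjoint_left.1 (hχχ hne) (hleg l x))
  · rintro (u | ⟨l, r, p⟩) (u' | ⟨l', r', p'⟩) huv
    · obtain ⟨a, ha⟩ := huv
      have hlen : u.1.length < k := by simpa [ha] using u'.2
      change G (ψ u) (ψ u')
      rw [ha]
      exact hψadj u a hlen
    · exact huv.elim
    · obtain ⟨hp, hu'⟩ := huv
      change G (χ l (Sum.inr (r, p))) (ψ u')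
      rw [hu', ← (hχ l).2.2]
      exact (hχ l).2.1 (Sum.inr (r, p)) (Sum.inl ()) hp
    · obtain ⟨rfl, rfl, hp⟩ := huv
      exact (hχ l).2.1 (Sum.inr (r, p)) (Sum.inr (r, p')) ⟨rfl, hp⟩

theorem IsSpiderTree.containsSub_tAdj {H : ℕ} {ψ : List (Fin ℓ) → W}
    (hψ : IsSpiderTree G k H k ψ) (hk : 1 ≤ k) (hH : #(words ℓ k) + ℓ ^ k * (ℓ * k) ≤ H) :
    ContainsSub (TAdj k ℓ) G := by
  have hlegs : ∀ (l : List.Vector (Fin ℓ) k) (F : Finset W), #F + ℓ * k ≤ H →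
      ∃ χ, IsSpiderEmbedding G (ψ l.1) χ ∧ Disjoint (legSet χ) F := fun l F hF =>
    (hψ.2.2 l.1 l.2).exists_legSet_disjoint (ℓ := ℓ) F (by nlinarith)
  obtain ⟨χ, hχ, hχχ⟩ := exists_pairwise_disjoint (fun _ => card_legSet_le _) hlegs
    ((words ℓ k).image ψ) (by simpa using (Nat.add_le_add_right card_image_le _).trans hH)
  exact containsSub_tAdj_of_legs hψ.1 hψ.2.1 (fun l => (hχ l).1) (fun l => (hχ l).2) hχχ

end Assembly

/-- If `f` is such that every digraph of minimum out-degree at least `f(k, h)` contains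
`S⁻_{k,h}`, then every digraph of minimum out-degree at least
`f(k, 3kℓ^(k+1)) + 2kℓ^k` contains `T(k,ℓ)` (`k ≥ 1`, `ℓ ≥ 2`). -/
theorem stmt12 (k ℓ : ℕ) (hk : 1 ≤ k) (hℓ : 2 ≤ ℓ) (f : ℕ → ℕ → ℕ)
    (hf : ∀ (k' h : ℕ) (W : Type) (_ : Finite W) (_ : Nonempty W) (G : W → W → Prop),
      Loopless G → (∀ v, f k' h ≤ outDeg G v) → ContainsSub (SpiderAdj k' h) G)
    {W : Type} [Finite W] [Nonempty W] (G : W → W → Prop) (hG : Loopless G)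
    (hdeg : ∀ v, f k (3 * k * ℓ ^ (k + 1)) + 2 * k * ℓ ^ k ≤ outDeg G v) :
    ContainsSub (TAdj k ℓ) G := by
  have := Fintype.ofFinite W
  set H := 3 * k * ℓ ^ (k + 1)
  have hcentre : ∀ X : Finset W, X.Nonempty → (∀ v ∈ X, f k H ≤ outDegWithin G X v) →
      ∃ c ∈ X, IsSpiderCentre G k H c := by
    intro X hX hdegX
    have := hX.to_subtype
    obtain ⟨χ, hinj, hadj⟩ := hf k H X inferInstance this (fun a b => G a b) (fun a => hG a)
      fun v => (outDeg_subtype G X v).symm ▸ hdegX v v.2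
    exact ⟨χ (Sum.inl ()), (χ (Sum.inl ())).2, Subtype.val ∘ χ,
      Subtype.val_injective.comp hinj, fun u v huv => hadj u v huv, rfl⟩
  have hwords := card_words_lt hℓ k
  obtain ⟨v, -, hv⟩ := exists_isRobustRoot G k H (ℓ := ℓ) (n := #(words ℓ k)) hcentre k univ
    univ_nonempty fun v _ => by nlinarith [hdeg v, outDeg_eq_outDegWithin_univ G v]
  obtain ⟨ψ, -, hψ, -⟩ := hv ∅ (notMem_empty v) (by simp)
  exact hψ.containsSub_tAdj hk (card_words_add_le hk hℓ)
end

section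
/- For any three sets of vertices in a digraph where B and A are disjoint subsets of V, the number of 2-edge directed paths V → B → A equals |A → V → V| − |A → A → V| + |B → B → V| − |V → B → B|, where X → Y → Z counts directed paths (x,y,z) with x ∈ X, y ∈ Y, z ∈ Z, the three vertices distinct, and edges (x,y),(y,z). -/
/-- The number of 2-edge directed paths with first vertex in `X`, middle vertex in `Y`
and last vertex in `Z` (all three vertices distinct). -/
noncomputable def P2count {W : Type*} (G : W → W → Prop) (X Y Z : Set W) : ℕ :=
  Nat.card {p : W × W × W // p.1 ∈ X ∧ p.2.1 ∈ Y ∧ p.2.2 ∈ Z ∧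
    p.1 ≠ p.2.1 ∧ p.1 ≠ p.2.2 ∧ p.2.1 ≠ p.2.2 ∧ G p.1 p.2.1 ∧ G p.2.1 p.2.2}

lemma split_card {α W : Type} [Finite α] (Q : α → Prop) (f : α → W)
    (A B : Set W) (hdisj : Disjoint A B) (hcover : A ∪ B = Set.univ) :
    Nat.card {p : α // Q p} =
      Nat.card {p : α // Q p ∧ f p ∈ A} + Nat.card {p : α // Q p ∧ f p ∈ B} := by
  have h1 : {p : α | Q p} = {p : α | Q p ∧ f p ∈ A} ∪ {p : α | Q p ∧ f p ∈ B} := by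
    ext p
    simp only [Set.mem_setOf_eq, Set.mem_union]
    constructor
    · intro h
      have : f p ∈ A ∪ B := hcover ▸ Set.mem_univ _
      rcases this with h' | h'
      · exact Or.inl ⟨h, h'⟩
      · exact Or.inr ⟨h, h'⟩
    · rintro (⟨h, _⟩ | ⟨h, _⟩) <;> exact h
  have hd : Disjoint {p : α | Q p ∧ f p ∈ A} {p : α | Q p ∧ f p ∈ B} := by
    rw [Set.disjoint_left]
    rintro p ⟨_, hA⟩ ⟨_, hB⟩
    exact Set.disjoint_left.mp hdisj hA hB
  have e1 : Nat.card {p : α // Q p} = ({p : α | Q p} : Set α).ncard :=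
    Nat.card_coe_set_eq _
  have e2 : Nat.card {p : α // Q p ∧ f p ∈ A} = ({p : α | Q p ∧ f p ∈ A} : Set α).ncard :=
    Nat.card_coe_set_eq _
  have e3 : Nat.card {p : α // Q p ∧ f p ∈ B} = ({p : α | Q p ∧ f p ∈ B} : Set α).ncard :=
    Nat.card_coe_set_eq _
  rw [e1, e2, e3, h1, Set.ncard_union_eq hd (Set.toFinite _) (Set.toFinite _)]

section splits
variable {W : Type} [Finite W] (G : W → W → Prop) (A B : Set W)

lemma splitFirst (hdisj : Disjoint A B) (hcover : A ∪ B = Set.univ) (Y Z : Set W) :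
    P2count G Set.univ Y Z = P2count G A Y Z + P2count G B Y Z := by
  unfold P2count
  have h := split_card (α := W × W × W)
    (fun p => p.2.1 ∈ Y ∧ p.2.2 ∈ Z ∧ p.1 ≠ p.2.1 ∧ p.1 ≠ p.2.2 ∧ p.2.1 ≠ p.2.2 ∧
      G p.1 p.2.1 ∧ G p.2.1 p.2.2) (fun p => p.1) A B hdisj hcover
  rw [Nat.card_congr (Equiv.subtypeEquivRight (q := fun p : W × W × W =>
      (p.2.1 ∈ Y ∧ p.2.2 ∈ Z ∧ p.1 ≠ p.2.1 ∧ p.1 ≠ p.2.2 ∧ p.2.1 ≠ p.2.2 ∧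
      G p.1 p.2.1 ∧ G p.2.1 p.2.2)) (by intro p; simp only [Set.mem_univ, true_and])), h]
  congr 1 <;> exact Nat.card_congr (Equiv.subtypeEquivRight (by intro p; tauto))

lemma splitMiddle (hdisj : Disjoint A B) (hcover : A ∪ B = Set.univ) (X Z : Set W) :
    P2count G X Set.univ Z = P2count G X A Z + P2count G X B Z := by
  unfold P2count
  have h := split_card (α := W × W × W)
    (fun p => p.1 ∈ X ∧ p.2.2 ∈ Z ∧ p.1 ≠ p.2.1 ∧ p.1 ≠ p.2.2 ∧ p.2.1 ≠ p.2.2 ∧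
      G p.1 p.2.1 ∧ G p.2.1 p.2.2) (fun p => p.2.1) A B hdisj hcover
  rw [Nat.card_congr (Equiv.subtypeEquivRight (q := fun p : W × W × W =>
      (p.1 ∈ X ∧ p.2.2 ∈ Z ∧ p.1 ≠ p.2.1 ∧ p.1 ≠ p.2.2 ∧ p.2.1 ≠ p.2.2 ∧
      G p.1 p.2.1 ∧ G p.2.1 p.2.2)) (by intro p; simp only [Set.mem_univ, true_and])), h]
  congr 1 <;> exact Nat.card_congr (Equiv.subtypeEquivRight (by intro p; tauto))

lemma splitLast (hdisj : Disjoint A B) (hcover : A ∪ B = Set.univ) (X Y : Set W) :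
    P2count G X Y Set.univ = P2count G X Y A + P2count G X Y B := by
  unfold P2count
  have h := split_card (α := W × W × W)
    (fun p => p.1 ∈ X ∧ p.2.1 ∈ Y ∧ p.1 ≠ p.2.1 ∧ p.1 ≠ p.2.2 ∧ p.2.1 ≠ p.2.2 ∧
      G p.1 p.2.1 ∧ G p.2.1 p.2.2) (fun p => p.2.2) A B hdisj hcover
  rw [Nat.card_congr (Equiv.subtypeEquivRight (q := fun p : W × W × W =>
      (p.1 ∈ X ∧ p.2.1 ∈ Y ∧ p.1 ≠ p.2.1 ∧ p.1 ≠ p.2.2 ∧ p.2.1 ≠ p.2.2 ∧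
      G p.1 p.2.1 ∧ G p.2.1 p.2.2)) (by intro p; simp only [Set.mem_univ, true_and])), h]
  congr 1 <;> exact Nat.card_congr (Equiv.subtypeEquivRight (by intro p; tauto))

end splits

/-- For a partition `V = A ∪ B`,
`|V → B → A| = |A → V → V| − |A → A → V| + |B → B → V| − |V → B → B|`. -/
theorem stmt17 {W : Type} [Finite W] (G : W → W → Prop) (hG : Loopless G)
    (A B : Set W) (hdisj : Disjoint A B) (hcover : A ∪ B = Set.univ) :
    (P2count G Set.univ B A : ℤ) =
      (P2count G A Set.univ Set.univ : ℤ) - (P2count G A A Set.univ : ℤ) +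
      (P2count G B B Set.univ : ℤ) - (P2count G Set.univ B B : ℤ) := by
  have h1 := splitFirst G A B hdisj hcover B A
  have h2 := splitMiddle G A B hdisj hcover A Set.univ
  have h3 := splitLast G A B hdisj hcover A B
  have h4 := splitLast G A B hdisj hcover B B
  have h5 := splitFirst G A B hdisj hcover B B
  have h6 := splitLast G A B hdisj hcover A A
  zify at h1 h2 h3 h4 h5 h6
  rw [h1, h2, h3, h4, h5, h6]
  ring
end
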